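/- arXiv:2603.27874 — 6 statements merged into one kernel-verified Lean document; each statement's English description precedes it below -/
import Mathlib

section
/- Let Ξ be a d×d real matrix for which 0 is a simple eigenvalue (a root of the characteristic polynomial of multiplicity exactly 1), and let η ∈ ℝ^d be a unit vector with Ξη = 0 and ηᵀΞ = 0. Let v, w ∈ ℝ^d be nonzero. Then there exist ε > 0 and a function κ : ℝ → ℝ such that κ(0) = 0, κ is differentiable at 0 with derivative κ'(0) = (ηᵀv)(wᵀη), and for every t ∈ [0, ε] the number κ(t) is an eigenvalue of the matrix Ξ + t·v wᵀ. -/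
open Matrix Polynomial

-- 1x1 block helper
lemma row_mul_mul_col {K : Type*} [CommRing K] {n : ℕ} (M : Matrix (Fin n) (Fin n) K)
    (x u : Fin n → K) :
    (replicateRow Unit x * M * replicateCol Unit u) () () = x ⬝ᵥ M.mulVec u := by
  simp [Matrix.mul_apply, dotProduct, Matrix.mulVec, Finset.sum_mul, Finset.mul_sum]
  rw [Finset.sum_comm]
  exact Finset.sum_congr rfl fun j _ => Finset.sum_congr rfl fun i _ => by ring

-- rank one determinant update over a field
lemma det_add_vecMulVec_of_det_ne_zero {K : Type*} [Field K] {n : ℕ}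
    (B : Matrix (Fin n) (Fin n) K) (hB : B.det ≠ 0) (u x : Fin n → K) :
    (B + vecMulVec u x).det = B.det + x ⬝ᵥ B.adjugate.mulVec u := by
  rw [vecMulVec_eq Unit, Matrix.det_add_replicateCol_mul_replicateRow hB.isUnit u x,
    Matrix.det_unique (1 + replicateRow Unit x * B⁻¹ * replicateCol Unit u)]
  have h1 : B.det • B⁻¹ = B.adjugate := by
    rw [Matrix.inv_def, smul_smul, Ring.inverse_eq_inv', mul_inv_cancel₀ hB, one_smul]
  have h2 : B.det * (replicateRow Unit x * B⁻¹ * replicateCol Unit u) () () = x ⬝ᵥ B.adjugate.mulVec u := by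
    rw [← row_mul_mul_col (M := B.adjugate), ← h1, Matrix.mul_smul, Matrix.smul_mul,
      Matrix.smul_apply, smul_eq_mul]
  rw [Matrix.add_apply, Matrix.one_apply_eq, mul_add, mul_one, h2]

lemma map_dot_mulVec {R S : Type*} [CommRing R] [CommRing S] (f : R →+* S) {n : ℕ}
    (x y : Fin n → R) (M : Matrix (Fin n) (Fin n) R) :
    f (x ⬝ᵥ M.mulVec y) = (f ∘ x) ⬝ᵥ (f.mapMatrix M).mulVec (f ∘ y) := by
  simp [dotProduct, Matrix.mulVec, map_sum, _root_.map_mul, RingHom.mapMatrix_apply, Matrix.map_apply]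

lemma charmatrix_add_eq {n : ℕ} (A N : Matrix (Fin n) (Fin n) ℝ) :
    charmatrix (A + N) = charmatrix A - N.map C := by
  ext i j
  simp [charmatrix_apply, Matrix.map_apply, C_add]
  ring

/-- rank-one update of the characteristic polynomial -/
lemma charpoly_add_vecMulVec {n : ℕ} (A : Matrix (Fin n) (Fin n) ℝ) (v w : Fin n → ℝ) :
    (A + vecMulVec v w).charpoly =
      A.charpoly - (fun i => C (w i)) ⬝ᵥ (adjugate (charmatrix A)).mulVec (fun i => C (v i)) := by
  set K := FractionRing (Polynomial ℝ)
  have hinj : Function.Injective (algebraMap (Polynomial ℝ) K) := IsFractionRing.injective _ _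
  apply hinj
  set f : Polynomial ℝ →+* K := (algebraMap (Polynomial ℝ) K : Polynomial ℝ →+* K)
  set B : Matrix (Fin n) (Fin n) K := f.mapMatrix (charmatrix A) with hBdef
  have hdetB : B.det = f A.charpoly := by
    rw [Matrix.charpoly, ← RingHom.map_det]
  have hBne : B.det ≠ 0 := by
    rw [hdetB]
    intro h
    exact (A.charpoly_monic.ne_zero) (hinj (by simpa using h))
  have hmap : f.mapMatrix (charmatrix (A + vecMulVec v w)) =
      B + vecMulVec (fun i => f (C (- v i))) (fun j => f (C (w j))) := by
    rw [charmatrix_add_eq]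
    ext i j
    simp [RingHom.mapMatrix_apply, Matrix.map_apply, vecMulVec_apply, hBdef, sub_eq_add_neg,
      _root_.map_mul]
    ring
  have := det_add_vecMulVec_of_det_ne_zero B hBne
      (fun i => f (C (- v i))) (fun j => f (C (w j)))
  calc f (A + vecMulVec v w).charpoly
      = (f.mapMatrix (charmatrix (A + vecMulVec v w))).det := by
        rw [Matrix.charpoly, RingHom.map_det]
    _ = B.det + (fun j => f (C (w j))) ⬝ᵥ B.adjugate.mulVec (fun i => f (C (- v i))) := by
        rw [hmap, this]
    _ = f (A.charpoly -
          (fun i => C (w i)) ⬝ᵥ (adjugate (charmatrix A)).mulVec (fun i => C (v i))) := by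
        rw [map_sub, hdetB, hBdef, ← RingHom.map_adjugate,
          map_dot_mulVec f (fun i => C (w i)) (fun i => C (v i))]
        congr 1
        simp [dotProduct, Matrix.mulVec, Finset.mul_sum, Finset.sum_mul, map_neg, _root_.map_mul]
        rw [← Finset.sum_neg_distrib]
        refine Finset.sum_congr rfl fun x _ => ?_
        rw [← Finset.sum_neg_distrib]
        refine Finset.sum_congr rfl fun i _ => ?_
        ring

lemma charpoly_vecMulVec_self {d : ℕ} (hd : 1 ≤ d) (η : Fin d → ℝ)
    (hη2 : ∑ i, η i ^ 2 = 1) :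
    (vecMulVec η η).charpoly = X ^ d - X ^ (d - 1) := by
  have h0 : charmatrix (0 : Matrix (Fin d) (Fin d) ℝ) = (X : ℝ[X]) • (1 : Matrix (Fin d) (Fin d) ℝ[X]) := by
    ext i j
    by_cases h : i = j <;>
      simp [charmatrix_apply, Matrix.one_apply, Matrix.diagonal_apply, h]
  have hadj : adjugate (charmatrix (0 : Matrix (Fin d) (Fin d) ℝ)) =
      (X : ℝ[X]) ^ (d - 1) • (1 : Matrix (Fin d) (Fin d) ℝ[X]) := by
    rw [h0, adjugate_smul, adjugate_one, Fintype.card_fin]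
  have hc0 : (0 : Matrix (Fin d) (Fin d) ℝ).charpoly = X ^ d := by
    rw [Matrix.charpoly, h0, Matrix.smul_eq_diagonal_mul, Matrix.mul_one, det_diagonal,
      Finset.prod_const, Finset.card_univ, Fintype.card_fin]
  have := charpoly_add_vecMulVec (0 : Matrix (Fin d) (Fin d) ℝ) η η
  rw [zero_add, hc0, hadj] at this
  rw [this]
  congr 1
  have : ∀ x : Fin d → ℝ[X], ((X : ℝ[X]) ^ (d - 1) • (1 : Matrix (Fin d) (Fin d) ℝ[X])).mulVec x
      = (X : ℝ[X]) ^ (d - 1) • x := by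
    intro x
    rw [Matrix.smul_mulVec, Matrix.one_mulVec]
  rw [this, dotProduct_smul]
  have hsum : (fun i => C (η i)) ⬝ᵥ (fun i => C (η i)) = (1 : ℝ[X]) := by
    simp only [dotProduct, ← C_mul, ← map_sum]
    have : ∑ i, η i * η i = 1 := by simpa [pow_two] using hη2
    rw [this, C_1]
  rw [hsum, smul_eq_mul, mul_one]

lemma charpoly_eq_X_mul {d : ℕ} (hd : 1 ≤ d) (Ξ : Matrix (Fin d) (Fin d) ℝ)
    (η : Fin d → ℝ) (hη2 : ∑ i, η i ^ 2 = 1)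
    (hleft : Ξ.mulVec η = 0) (hright : Matrix.vecMul η Ξ = 0) :
    Ξ.charpoly = X *
      ((fun i => C (η i)) ⬝ᵥ (adjugate (charmatrix Ξ)).mulVec (fun i => C (η i))) := by
  set q : ℝ[X] :=
    (fun i => C (η i)) ⬝ᵥ (adjugate (charmatrix Ξ)).mulVec (fun i => C (η i)) with hq
  set P : Matrix (Fin d) (Fin d) ℝ := vecMulVec η η with hP
  have hΞP : Ξ * P = 0 := by
    ext i j
    have h1 : ∑ k, Ξ i k * η k = 0 := congrFun hleft i
    simp only [Matrix.mul_apply, hP, vecMulVec_apply, Matrix.zero_apply]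
    calc ∑ k, Ξ i k * (η k * η j) = (∑ k, Ξ i k * η k) * η j := by
          rw [Finset.sum_mul]; exact Finset.sum_congr rfl fun k _ => by ring
      _ = 0 := by rw [h1, zero_mul]
  have hPΞ : P * Ξ = 0 := by
    ext i j
    have h1 : ∑ k, η k * Ξ k j = 0 := congrFun hright j
    simp only [Matrix.mul_apply, hP, vecMulVec_apply, Matrix.zero_apply]
    calc ∑ k, η i * η k * Ξ k j = η i * ∑ k, η k * Ξ k j := by
          rw [Finset.mul_sum]; exact Finset.sum_congr rfl fun k _ => by ring
      _ = 0 := by rw [h1, mul_zero]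
  -- key matrix identity
  have hkey : charmatrix Ξ * charmatrix P = (X : ℝ[X]) • charmatrix (Ξ + P) := by
    have hmulmap : ((C : ℝ →+* ℝ[X]).mapMatrix Ξ) * ((C : ℝ →+* ℝ[X]).mapMatrix P) = 0 := by
      rw [← _root_.map_mul, hΞP, map_zero]
    have hscal : ∀ M : Matrix (Fin d) (Fin d) ℝ[X],
        Matrix.scalar (Fin d) (X : ℝ[X]) * M = (X : ℝ[X]) • M := by
      intro M; rw [scalar_apply, ← Matrix.smul_eq_diagonal_mul]
    have hscal' : ∀ M : Matrix (Fin d) (Fin d) ℝ[X],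
        M * Matrix.scalar (Fin d) (X : ℝ[X]) = (X : ℝ[X]) • M := by
      intro M; rw [scalar_apply, ← Matrix.smul_eq_mul_diagonal]
    have hch : ∀ M : Matrix (Fin d) (Fin d) ℝ,
        charmatrix M = Matrix.scalar (Fin d) (X : ℝ[X]) - (C : ℝ →+* ℝ[X]).mapMatrix M := fun M => rfl
    rw [hch, hch, hch, sub_mul, mul_sub, mul_sub, hmulmap, sub_zero, hscal, hscal, hscal']
    simp only [_root_.map_add, RingHom.mapMatrix_apply, smul_sub, smul_add]
    abel
  have hdet : Ξ.charpoly * P.charpoly = (X : ℝ[X]) ^ d * (Ξ + P).charpoly := by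
    have := congrArg Matrix.det hkey
    rw [Matrix.det_mul, Matrix.det_smul, Fintype.card_fin] at this
    exact this
  have hPchar : P.charpoly = X ^ d - X ^ (d - 1) := charpoly_vecMulVec_self hd η hη2
  have hΞP' : (Ξ + P).charpoly = Ξ.charpoly - q := by
    rw [hP, charpoly_add_vecMulVec, hq]
  rw [hPchar, hΞP'] at hdet
  have hXd : (X : ℝ[X]) ^ d = X ^ (d - 1) * X := by
    conv_lhs => rw [← Nat.sub_add_cancel hd]
    rw [pow_succ]
  have hcancel : (X : ℝ[X]) ^ (d - 1) * (X * q) = X ^ (d - 1) * Ξ.charpoly := by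
    have expand : Ξ.charpoly * (X ^ d - X ^ (d - 1)) = X ^ d * (Ξ.charpoly - q) := hdet
    rw [hXd] at expand
    linear_combination expand
  exact (mul_left_cancel₀ (pow_ne_zero _ (X_ne_zero : (X : ℝ[X]) ≠ 0)) hcancel).symm

lemma charpoly_transpose {d : ℕ} (Ξ : Matrix (Fin d) (Fin d) ℝ) :
    Ξᵀ.charpoly = Ξ.charpoly := by
  have h : charmatrix Ξᵀ = (charmatrix Ξ)ᵀ := by
    ext i j
    by_cases hij : i = j
    · subst hij; simp [charmatrix_apply]
    · simp [charmatrix_apply, Matrix.diagonal_apply, hij, Ne.symm hij, Matrix.transpose_apply]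
  rw [Matrix.charpoly, Matrix.charpoly, h, Matrix.det_transpose]

/-- If the characteristic polynomial has trailing degree 1, the kernel is spanned by `η`. -/
lemma kernel_eq_span {d : ℕ} (Ξ : Matrix (Fin d) (Fin d) ℝ) (η : Fin d → ℝ)
    (hη2 : ∑ i, η i ^ 2 = 1) (hleft : Ξ.mulVec η = 0)
    (htd : Ξ.charpoly.natTrailingDegree = 1) :
    ∀ x : Fin d → ℝ, Ξ.mulVec x = 0 → x = (η ⬝ᵥ x) • η := by
  intro x hx
  set φ : Module.End ℝ (Fin d → ℝ) := Matrix.mulVecLin Ξ with hφdef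
  have hφchar : φ.charpoly = Ξ.charpoly := by
    rw [← LinearMap.charpoly_toMatrix φ (Pi.basisFun ℝ (Fin d)),
      LinearMap.toMatrix_eq_toMatrix', hφdef, ← Matrix.toLin'_apply', LinearMap.toMatrix'_toLin']
  have hdim : Module.finrank ℝ (φ.maxGenEigenspace 0) = 1 := by
    rw [LinearMap.finrank_maxGenEigenspace_zero_eq, hφchar, htd]
  have hmem : ∀ y : Fin d → ℝ, Ξ.mulVec y = 0 → y ∈ φ.maxGenEigenspace 0 := by
    intro y hy
    rw [Module.End.mem_maxGenEigenspace]
    exact ⟨1, by simpa [hφdef] using hy⟩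
  have hηne : η ≠ 0 := by
    intro h
    rw [h] at hη2
    simp at hη2
  have hηmem := hmem η hleft
  have hηne' : (⟨η, hηmem⟩ : φ.maxGenEigenspace 0) ≠ 0 := by
    intro h
    exact hηne (congrArg Subtype.val h)
  obtain ⟨c, hc⟩ := (finrank_eq_one_iff_of_nonzero' (⟨η, hηmem⟩ : φ.maxGenEigenspace 0)
    hηne').mp hdim ⟨x, hmem x hx⟩
  have hcx : c • η = x := congrArg Subtype.val hc
  have hdot : η ⬝ᵥ x = c := by
    rw [← hcx, dotProduct_smul, smul_eq_mul]
    have : η ⬝ᵥ η = 1 := by simpa [dotProduct, pow_two] using hη2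
    rw [this, mul_one]
  rw [hdot, hcx]

lemma dot_vecMulVec_mulVec {d : ℕ} (a b v w : Fin d → ℝ) :
    w ⬝ᵥ (vecMulVec a b).mulVec v = (w ⬝ᵥ a) * (b ⬝ᵥ v) := by
  simp only [dotProduct, Matrix.mulVec, vecMulVec_apply, Finset.sum_mul, Finset.mul_sum]
  rw [Finset.sum_comm]
  refine Finset.sum_congr rfl fun j _ => Finset.sum_congr rfl fun i _ => by ring

lemma adjugate_neg_eq {d : ℕ} (Ξ : Matrix (Fin d) (Fin d) ℝ) (η : Fin d → ℝ)
    (hη2 : ∑ i, η i ^ 2 = 1) (hleft : Ξ.mulVec η = 0) (hright : Matrix.vecMul η Ξ = 0)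
    (htd : Ξ.charpoly.natTrailingDegree = 1) :
    adjugate (-Ξ) = (η ⬝ᵥ (adjugate (-Ξ)).mulVec η) • vecMulVec η η := by
  have hηdot : η ⬝ᵥ η = 1 := by simpa [dotProduct, pow_two] using hη2
  have hηne : η ≠ 0 := by
    intro h; rw [h] at hη2; simp at hη2
  have hdet : Ξ.det = 0 := by
    rw [← Matrix.exists_mulVec_eq_zero_iff]
    exact ⟨η, hηne, hleft⟩
  set G : Matrix (Fin d) (Fin d) ℝ := adjugate (-Ξ) with hG
  have hΞG : Ξ * G = 0 := by
    have h1 : (-Ξ) * G = 0 := by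
      rw [hG, Matrix.mul_adjugate, Matrix.det_neg, hdet, mul_zero, zero_smul]
    rw [Matrix.neg_mul, neg_eq_zero] at h1
    exact h1
  have hGΞ : G * Ξ = 0 := by
    have h1 : G * (-Ξ) = 0 := by
      rw [hG, Matrix.adjugate_mul, Matrix.det_neg, hdet, mul_zero, zero_smul]
    rw [Matrix.mul_neg, neg_eq_zero] at h1
    exact h1
  have hleftT : Ξᵀ.mulVec η = 0 := by rw [Matrix.mulVec_transpose]; exact hright
  have htdT : Ξᵀ.charpoly.natTrailingDegree = 1 := by rw [charpoly_transpose]; exact htd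
  set r : Fin d → ℝ := Matrix.vecMul η G with hr
  have hcol : ∀ j, (fun i => G i j) = r j • η := by
    intro j
    have hker : Ξ.mulVec (fun i => G i j) = 0 := by
      ext i
      have : (Ξ * G) i j = 0 := by rw [hΞG]; rfl
      simpa [Matrix.mul_apply, Matrix.mulVec, dotProduct] using this
    have := kernel_eq_span Ξ η hη2 hleft htd _ hker
    rw [this]
    congr 1
  have hrk : Ξᵀ.mulVec r = 0 := by
    rw [Matrix.mulVec_transpose, hr, Matrix.vecMul_vecMul, hGΞ, Matrix.vecMul_zero]
  have hreq : r = (η ⬝ᵥ r) • η := kernel_eq_span Ξᵀ η hη2 hleftT htdT r hrk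
  set c : ℝ := η ⬝ᵥ r with hc
  have hGij : ∀ i j, G i j = c * η i * η j := by
    intro i j
    have h1 : G i j = r j * η i := congrFun (hcol j) i
    have h2 : r j = c * η j := by
      have := congrFun hreq j
      simpa using this
    rw [h1, h2]; ring
  have hcval : η ⬝ᵥ G.mulVec η = c := by
    have hGeq : G = c • vecMulVec η η := by
      ext i j; simp [vecMulVec_apply, hGij i j]; ring
    rw [hGeq, Matrix.smul_mulVec, dotProduct_smul, smul_eq_mul,
      dot_vecMulVec_mulVec, hηdot, one_mul, mul_one]
  rw [hcval]
  ext i j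
  simp [vecMulVec_apply, hGij i j]
  ring

/-- The shear map `(s, μ) ↦ (s, b μ - a s)` as a continuous linear equivalence. -/
noncomputable def shearEquiv (a b : ℝ) (hb : b ≠ 0) : (ℝ × ℝ) ≃L[ℝ] (ℝ × ℝ) :=
  LinearEquiv.toContinuousLinearEquiv
  { toFun := fun z => (z.1, b * z.2 - a * z.1)
    map_add' := by intro x y; ext <;> simp <;> ring
    map_smul' := by intro r x; ext <;> simp <;> ring
    invFun := fun y => (y.1, (y.2 + a * y.1) / b)
    left_inv := by intro z; ext <;> field_simp <;> ring
    right_inv := by intro y; ext <;> field_simp <;> ring }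

@[simp] lemma shearEquiv_apply (a b : ℝ) (hb : b ≠ 0) (z : ℝ × ℝ) :
    shearEquiv a b hb z = (z.1, b * z.2 - a * z.1) := rfl

@[simp] lemma shearEquiv_symm_apply (a b : ℝ) (hb : b ≠ 0) (y : ℝ × ℝ) :
    (shearEquiv a b hb).symm y = (y.1, (y.2 + a * y.1) / b) := rfl

lemma hasStrictFDerivAt_shear (p q : Polynomial ℝ) (hb : p.derivative.eval 0 ≠ 0) :
    HasStrictFDerivAt (fun z : ℝ × ℝ => (z.1, p.eval z.2 - z.1 * q.eval z.2))
      (shearEquiv (q.eval 0) (p.derivative.eval 0) hb : (ℝ × ℝ) →L[ℝ] (ℝ × ℝ))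
      ((0 : ℝ), (0 : ℝ)) := by
  set a := q.eval 0
  set b := p.derivative.eval 0
  have h1 : HasStrictFDerivAt (fun z : ℝ × ℝ => z.1)
      (ContinuousLinearMap.fst ℝ ℝ ℝ) ((0 : ℝ), (0 : ℝ)) := hasStrictFDerivAt_fst
  have hp : HasStrictFDerivAt (fun z : ℝ × ℝ => p.eval z.2)
      (b • ContinuousLinearMap.snd ℝ ℝ ℝ) ((0 : ℝ), (0 : ℝ)) :=
    by have h := (p.hasStrictDerivAt (0 : ℝ)).comp_hasStrictFDerivAt (f := Prod.snd) (((0 : ℝ), (0 : ℝ)) : ℝ × ℝ)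
        (hasStrictFDerivAt_snd (𝕜 := ℝ) (E := ℝ) (F := ℝ) (p := ((0 : ℝ), (0 : ℝ)))); exact h
  have hq : HasStrictFDerivAt (fun z : ℝ × ℝ => q.eval z.2)
      (q.derivative.eval 0 • ContinuousLinearMap.snd ℝ ℝ ℝ) ((0 : ℝ), (0 : ℝ)) :=
    by have h := (q.hasStrictDerivAt (0 : ℝ)).comp_hasStrictFDerivAt (f := Prod.snd) (((0 : ℝ), (0 : ℝ)) : ℝ × ℝ)
        (hasStrictFDerivAt_snd (𝕜 := ℝ) (E := ℝ) (F := ℝ) (p := ((0 : ℝ), (0 : ℝ)))); exact h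
  have h2 := hp.sub (h1.mul hq)
  have hG := h1.prodMk h2
  refine hG.congr_fderiv ?_
  apply ContinuousLinearMap.ext
  intro z
  apply Prod.ext <;>
    simp [ContinuousLinearMap.prod_apply, ContinuousLinearMap.smul_apply,
      ContinuousLinearMap.sub_apply, ContinuousLinearMap.add_apply, a, b] <;> ring

lemma charpoly_add_smul_vecMulVec {n : ℕ} (A : Matrix (Fin n) (Fin n) ℝ) (v w : Fin n → ℝ)
    (t : ℝ) :
    (A + t • vecMulVec v w).charpoly = A.charpoly -
      C t * ((fun i => C (w i)) ⬝ᵥ (adjugate (charmatrix A)).mulVec (fun i => C (v i))) := by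
  have h1 : t • vecMulVec v w = vecMulVec (t • v) w := by
    ext i j; simp [vecMulVec_apply]; ring
  rw [h1, charpoly_add_vecMulVec]
  congr 1
  have h2 : (fun i => C ((t • v) i)) = (C t) • (fun i => C (v i)) := by
    ext i; simp [_root_.map_mul]
  rw [h2, Matrix.mulVec_smul, dotProduct_smul, smul_eq_mul]

lemma eval_zero_dot_adjugate_charmatrix {n : ℕ} (A : Matrix (Fin n) (Fin n) ℝ)
    (x y : Fin n → ℝ) :
    ((fun i => C (x i)) ⬝ᵥ (adjugate (charmatrix A)).mulVec (fun i => C (y i))).eval 0 =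
      x ⬝ᵥ (adjugate (-A)).mulVec y := by
  have h := map_dot_mulVec (evalRingHom (0 : ℝ)) (fun i => C (x i)) (fun i => C (y i))
    (adjugate (charmatrix A))
  have hx : (⇑(evalRingHom (0 : ℝ)) ∘ fun i => C (x i)) = x := by
    ext i; simp
  have hy : (⇑(evalRingHom (0 : ℝ)) ∘ fun i => C (y i)) = y := by
    ext i; simp
  have hm : (evalRingHom (0 : ℝ)).mapMatrix (charmatrix A) = -A := by
    ext i j
    by_cases hij : i = j
    · subst hij; simp [charmatrix_apply, RingHom.mapMatrix_apply, Matrix.map_apply]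
    · simp [charmatrix_apply, RingHom.mapMatrix_apply, Matrix.map_apply,
        Matrix.diagonal_apply, hij]
  rw [RingHom.map_adjugate, hm, hx, hy] at h
  exact h

open Polynomial in
/-- eigenvalue perturbation of a simple zero eigenvalue under a
rank-one perturbation `t • v wᵀ`. -/
theorem stmt_0 {d : ℕ} (hd : 1 ≤ d) (Ξ : Matrix (Fin d) (Fin d) ℝ)
    (η v w : Fin d → ℝ)
    (hsimple : Polynomial.rootMultiplicity (0 : ℝ) Ξ.charpoly = 1)
    (hnorm : Real.sqrt (∑ i, η i ^ 2) = 1)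
    (hleft : Ξ.mulVec η = 0) (hright : Matrix.vecMul η Ξ = 0)
    (hv : v ≠ 0) (hw : w ≠ 0) :
    ∃ ε > (0 : ℝ), ∃ κ : ℝ → ℝ, κ 0 = 0 ∧
      HasDerivAt κ ((η ⬝ᵥ v) * (w ⬝ᵥ η)) 0 ∧
      ∀ t ∈ Set.Icc (0 : ℝ) ε,
        Polynomial.IsRoot (Ξ + t • Matrix.vecMulVec v w).charpoly (κ t) := by
  have hη2 : ∑ i, η i ^ 2 = 1 := Real.sqrt_eq_one.mp hnorm
  set p : Polynomial ℝ := Ξ.charpoly with hpdef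
  set qη : Polynomial ℝ :=
    (fun i => C (η i)) ⬝ᵥ (adjugate (charmatrix Ξ)).mulVec (fun i => C (η i)) with hqηdef
  have hfact : p = X * qη := charpoly_eq_X_mul hd Ξ η hη2 hleft hright
  have hpne : p ≠ 0 := (Matrix.charpoly_monic Ξ).ne_zero
  set b : ℝ := qη.eval 0 with hbdef
  have hb : b ≠ 0 := by
    intro h
    have hdvd : X ∣ qη := by
      rw [Polynomial.X_dvd_iff, Polynomial.coeff_zero_eq_eval_zero]; exact h
    obtain ⟨u, hu⟩ := hdvd
    have hdvd2 : (X - Polynomial.C (0 : ℝ)) ^ 2 ∣ p := by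
      rw [Polynomial.C_0, sub_zero, hfact, hu, pow_two]
      exact ⟨u, by ring⟩
    have h2 := (Polynomial.le_rootMultiplicity_iff hpne).mpr hdvd2
    rw [hsimple] at h2
    omega
  have hp0 : p.eval 0 = 0 := by rw [hfact]; simp
  have hpderiv : p.derivative.eval 0 = b := by
    rw [hfact]
    simp [Polynomial.derivative_mul, hbdef]
  have htd : p.natTrailingDegree = 1 := by
    have hqne : qη ≠ 0 := fun h => hb (by rw [hbdef, h]; simp)
    have h0 : qη.natTrailingDegree = 0 :=
      Polynomial.natTrailingDegree_eq_zero_of_constantCoeff_ne_zero (by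
        rwa [Polynomial.constantCoeff_apply, Polynomial.coeff_zero_eq_eval_zero])
    rw [hfact, Polynomial.natTrailingDegree_mul Polynomial.X_ne_zero hqne,
      Polynomial.natTrailingDegree_X, h0]
  have hadj := adjugate_neg_eq Ξ η hη2 hleft hright htd
  have hbadj : η ⬝ᵥ (adjugate (-Ξ)).mulVec η = b := by
    rw [hbdef, hqηdef, eval_zero_dot_adjugate_charmatrix]
  rw [hbadj] at hadj
  set q : Polynomial ℝ :=
    (fun i => C (w i)) ⬝ᵥ (adjugate (charmatrix Ξ)).mulVec (fun i => C (v i)) with hqdef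
  set a : ℝ := q.eval 0 with hadef
  have ha : a = b * ((η ⬝ᵥ v) * (w ⬝ᵥ η)) := by
    rw [hadef, hqdef, eval_zero_dot_adjugate_charmatrix, hadj, Matrix.smul_mulVec,
      dotProduct_smul, smul_eq_mul, dot_vecMulVec_mulVec]
    ring
  have hroot : ∀ t lam : ℝ, ((Ξ + t • vecMulVec v w).charpoly).eval lam
      = p.eval lam - t * q.eval lam := by
    intro t lam
    rw [charpoly_add_smul_vecMulVec, ← hqdef, ← hpdef]
    simp
  have hb' : p.derivative.eval 0 ≠ 0 := by rw [hpderiv]; exact hb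
  have hstrict := hasStrictFDerivAt_shear p q hb'
  set g : ℝ × ℝ → ℝ × ℝ := hstrict.localInverse _ _ _ with hgdef
  have hG0 : ((((0 : ℝ), (0 : ℝ)) : ℝ × ℝ).1,
      p.eval ((((0 : ℝ), (0 : ℝ)) : ℝ × ℝ).2) -
        (((0 : ℝ), (0 : ℝ)) : ℝ × ℝ).1 * q.eval ((((0 : ℝ), (0 : ℝ)) : ℝ × ℝ).2))
      = (((0 : ℝ), (0 : ℝ)) : ℝ × ℝ) := by simp [hp0]
  have hev := hstrict.eventually_right_inverse
  rw [hG0] at hev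
  have htend : Filter.Tendsto (fun t : ℝ => ((t, (0 : ℝ)) : ℝ × ℝ)) (nhds 0)
      (nhds (((0 : ℝ), (0 : ℝ)) : ℝ × ℝ)) := by
    have := (continuous_id.prodMk (continuous_const (y := (0 : ℝ)))).tendsto (0 : ℝ)
    simpa using this
  have hev2 := htend.eventually hev
  obtain ⟨δ, hδpos, hball⟩ := Metric.eventually_nhds_iff.mp hev2
  refine ⟨δ / 2, by positivity, fun t => (g (t, 0)).2, ?_, ?_, ?_⟩
  · -- κ 0 = 0
    have h := hstrict.localInverse_apply_image
    rw [hG0] at h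
    show (g ((0 : ℝ), (0 : ℝ))).2 = 0
    rw [hgdef, h]
  · -- derivative
    have hginv := hstrict.to_localInverse
    rw [hG0] at hginv
    have hι : HasDerivAt (fun t : ℝ => ((t, (0 : ℝ)) : ℝ × ℝ)) (((1 : ℝ), (0 : ℝ)) : ℝ × ℝ) 0 :=
      (hasDerivAt_id (0 : ℝ)).prodMk (hasDerivAt_const (0 : ℝ) (0 : ℝ))
    have hκ' := HasFDerivAt.comp_hasDerivAt (f := fun t : ℝ => ((t, (0 : ℝ)) : ℝ × ℝ))
        (0 : ℝ) hginv.hasFDerivAt hι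
    have hκsnd := (hasFDerivAt_snd (𝕜 := ℝ) (E := ℝ) (F := ℝ)).comp_hasDerivAt 0 hκ'
    have hval : ((ContinuousLinearMap.snd ℝ ℝ ℝ)
        (((shearEquiv (q.eval 0) (p.derivative.eval 0) hb').symm :
          (ℝ × ℝ) →L[ℝ] (ℝ × ℝ)) ((1 : ℝ), (0 : ℝ)))) = (η ⬝ᵥ v) * (w ⬝ᵥ η) := by
      have h5 : ((shearEquiv (q.eval 0) (p.derivative.eval 0) hb').symm ((1 : ℝ), (0 : ℝ))).2
          = (η ⬝ᵥ v) * (w ⬝ᵥ η) := by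
        rw [shearEquiv_symm_apply, hpderiv, ← hadef, ha]
        field_simp
        ring
      simpa using h5
    rw [hval] at hκsnd
    exact hκsnd
  · -- roots
    intro t ht
    have hdist : dist t 0 < δ := by
      rw [Real.dist_eq, sub_zero, abs_of_nonneg ht.1]
      calc t ≤ δ / 2 := ht.2
        _ < δ := by linarith
    have heq := hball hdist
    have h1 : (g (t, 0)).1 = t := congrArg Prod.fst heq
    have h2 : p.eval ((g (t, 0)).2) - (g (t, 0)).1 * q.eval ((g (t, 0)).2) = 0 :=
      congrArg Prod.snd heq
    rw [h1] at h2
    rw [Polynomial.IsRoot.def, hroot t ((g (t, 0)).2)]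
    exact h2
end

section
/- For every integer k ≥ 0 and every θ ∈ ℝ^d, θᵀR(k)θ ≤ θᵀR(0)θ. -/
open Matrix

/-- The autocorrelation matrix `R(k) = ∑_{z,z'} π(z) (P^k)(z,z') ψ(z) ψ(z')ᵀ`. -/
noncomputable def Rmat {Z : Type*} [Fintype Z] [DecidableEq Z] {d : ℕ}
    (P : Matrix Z Z ℝ) (π : Z → ℝ) (ψ : Z → Fin d → ℝ) (k : ℕ) :
    Matrix (Fin d) (Fin d) ℝ :=
  ∑ z, ∑ z', (π z * (P ^ k) z z') • Matrix.vecMulVec (ψ z) (ψ z')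

lemma sum_mulVec' {Z : Type*} [Fintype Z] {d : ℕ} (s : Finset Z)
    (M : Z → Matrix (Fin d) (Fin d) ℝ) (v : Fin d → ℝ) :
    (∑ z ∈ s, M z).mulVec v = ∑ z ∈ s, (M z).mulVec v := by
  ext i
  simp [Matrix.mulVec, dotProduct, Matrix.sum_apply, Finset.sum_mul]
  exact Finset.sum_comm

lemma dot_sum' {Z : Type*} {d : ℕ} (s : Finset Z) (v : Fin d → ℝ) (w : Z → Fin d → ℝ) :
    v ⬝ᵥ (∑ z ∈ s, w z) = ∑ z ∈ s, v ⬝ᵥ w z := by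
  simp [dotProduct, Finset.mul_sum]
  exact Finset.sum_comm

lemma quad_form {Z : Type*} [Fintype Z] [DecidableEq Z] {d : ℕ}
    (P : Matrix Z Z ℝ) (π : Z → ℝ) (ψ : Z → Fin d → ℝ) (k : ℕ) (θ : Fin d → ℝ) :
    θ ⬝ᵥ (Rmat P π ψ k).mulVec θ
      = ∑ z, ∑ z', π z * (P ^ k) z z' * ((θ ⬝ᵥ ψ z) * (θ ⬝ᵥ ψ z')) := by
  unfold Rmat
  rw [sum_mulVec', dot_sum']
  refine Finset.sum_congr rfl fun z _ => ?_
  rw [sum_mulVec', dot_sum']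
  refine Finset.sum_congr rfl fun z' _ => ?_
  rw [Matrix.smul_mulVec, dotProduct_smul, smul_eq_mul]
  congr 1
  have : (Matrix.vecMulVec (ψ z) (ψ z')).mulVec θ = (ψ z' ⬝ᵥ θ) • ψ z := by
    ext i
    simp [Matrix.mulVec, Matrix.vecMulVec_apply, dotProduct, Finset.sum_mul]
    exact Finset.sum_congr rfl fun j _ => by ring
  rw [this, dotProduct_smul, smul_eq_mul, dotProduct_comm (ψ z')]
  ring

/-- `θᵀR(k)θ ≤ θᵀR(0)θ` for every `k ≥ 0` and every `θ`. -/
theorem stmt_6 {Z : Type*} [Fintype Z] [Nonempty Z] [DecidableEq Z]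
    (P : Matrix Z Z ℝ)
    (hP0 : ∀ z z', 0 ≤ P z z') (hP1 : ∀ z, ∑ z', P z z' = 1)
    (π : Z → ℝ) (hπ0 : ∀ z, 0 ≤ π z) (hπ1 : ∑ z, π z = 1)
    (hinv : ∀ z', ∑ z, π z * P z z' = π z')
    {d : ℕ} (hd : 1 ≤ d) (ψ : Z → Fin d → ℝ) :
    ∀ (k : ℕ) (θ : Fin d → ℝ),
      θ ⬝ᵥ (Rmat P π ψ k).mulVec θ ≤ θ ⬝ᵥ (Rmat P π ψ 0).mulVec θ := by
  intro k θ
  set f : Z → ℝ := fun z => θ ⬝ᵥ ψ z with hf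
  -- entrywise nonnegativity of P^k
  have hPk0 : ∀ (k : ℕ) z z', 0 ≤ (P ^ k) z z' := by
    intro k
    induction k with
    | zero => intro z z'; simp [Matrix.one_apply]; positivity
    | succ n ih =>
      intro z z'
      rw [pow_succ, Matrix.mul_apply]
      exact Finset.sum_nonneg fun y _ => mul_nonneg (ih z y) (hP0 y z')
  -- row sums of P^k are 1
  have hPk1 : ∀ (k : ℕ) z, ∑ z', (P ^ k) z z' = 1 := by
    intro k
    induction k with
    | zero => intro z; simp [Matrix.one_apply]
    | succ n ih =>
      intro z
      simp only [pow_succ, Matrix.mul_apply]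
      rw [Finset.sum_comm]
      calc ∑ y, ∑ z', (P ^ n) z y * P y z' = ∑ y, (P ^ n) z y * ∑ z', P y z' := by
            simp [Finset.mul_sum]
        _ = 1 := by simp [hP1, ih z]
  -- invariance of π under P^k
  have hinvk : ∀ (k : ℕ) z', ∑ z, π z * (P ^ k) z z' = π z' := by
    intro k
    induction k with
    | zero => intro z'; simp [Matrix.one_apply]
    | succ n ih =>
      intro z'
      simp only [pow_succ, Matrix.mul_apply, Finset.mul_sum]
      rw [Finset.sum_comm]
      calc ∑ y, ∑ z, π z * ((P ^ n) z y * P y z')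
          = ∑ y, (∑ z, π z * (P ^ n) z y) * P y z' := by
            simp [Finset.sum_mul]; exact Finset.sum_congr rfl fun y _ =>
              Finset.sum_congr rfl fun z _ => by ring
        _ = ∑ y, π y * P y z' := by simp [ih]
        _ = π z' := hinv z'
  rw [quad_form, quad_form]
  have hR0 : ∑ z, ∑ z', π z * (P ^ 0) z z' * (f z * f z') = ∑ z, π z * (f z)^2 := by
    refine Finset.sum_congr rfl fun z _ => ?_
    simp [Matrix.one_apply, Finset.sum_ite_eq, sq]
  rw [hR0]
  have key : ∑ z, ∑ z', π z * (P ^ k) z z' * (f z * f z')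
      ≤ ∑ z, ∑ z', π z * (P ^ k) z z' * ((f z ^ 2 + f z' ^ 2) / 2) := by
    refine Finset.sum_le_sum fun z _ => Finset.sum_le_sum fun z' _ => ?_
    have ha : 0 ≤ π z * (P ^ k) z z' := mul_nonneg (hπ0 z) (hPk0 k z z')
    have : f z * f z' ≤ (f z ^ 2 + f z' ^ 2) / 2 := by nlinarith [sq_nonneg (f z - f z')]
    exact mul_le_mul_of_nonneg_left this ha
  refine key.trans_eq ?_
  have split : ∑ z, ∑ z', π z * (P ^ k) z z' * ((f z ^ 2 + f z' ^ 2) / 2)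
      = (∑ z, ∑ z', π z * (P ^ k) z z' * (f z ^ 2)) / 2
        + (∑ z, ∑ z', π z * (P ^ k) z z' * (f z' ^ 2)) / 2 := by
    rw [Finset.sum_div, Finset.sum_div, ← Finset.sum_add_distrib]
    refine Finset.sum_congr rfl fun z _ => ?_
    rw [Finset.sum_div, Finset.sum_div, ← Finset.sum_add_distrib]
    refine Finset.sum_congr rfl fun z' _ => by ring
  rw [split]
  have h1 : ∑ z, ∑ z', π z * (P ^ k) z z' * (f z ^ 2) = ∑ z, π z * f z ^ 2 := by
    refine Finset.sum_congr rfl fun z _ => ?_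
    calc ∑ z', π z * (P ^ k) z z' * f z ^ 2
        = (π z * f z ^ 2) * ∑ z', (P ^ k) z z' := by
          rw [Finset.mul_sum]; exact Finset.sum_congr rfl fun z' _ => by ring
      _ = π z * f z ^ 2 := by rw [hPk1 k z, mul_one]
  have h2 : ∑ z, ∑ z', π z * (P ^ k) z z' * (f z' ^ 2) = ∑ z, π z * f z ^ 2 := by
    rw [Finset.sum_comm]
    refine Finset.sum_congr rfl fun z' _ => ?_
    calc ∑ z, π z * (P ^ k) z z' * f z' ^ 2
        = (∑ z, π z * (P ^ k) z z') * f z' ^ 2 := by rw [Finset.sum_mul]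
      _ = π z' * f z' ^ 2 := by rw [hinvk k z']
  rw [h1, h2]
  ring
end

section
/- Let λ ∈ [0,1] and γ ∈ [0,1) with λγ < 1, and let Ā(λ,γ) = −∑_{k=0}^∞ (λγ)^k R(k) + γ ∑_{k=0}^∞ (λγ)^k R(k+1). Then for every θ ∈ ℝ^d, θᵀĀ(λ,γ)θ ≤ −(1−γ)·θᵀR(0)θ. -/
open Matrix

/-- The TD(λ) mean-flow matrix
`Ā(λ,γ) = −∑_{k≥0} (λγ)^k R(k) + γ ∑_{k≥0} (λγ)^k R(k+1)`. -/
noncomputable def Abar {Z : Type*} [Fintype Z] [DecidableEq Z] {d : ℕ}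
    (P : Matrix Z Z ℝ) (π : Z → ℝ) (ψ : Z → Fin d → ℝ) (lam gam : ℝ) :
    Matrix (Fin d) (Fin d) ℝ :=
  -(∑' k : ℕ, (lam * gam) ^ k • Rmat P π ψ k)
    + gam • ∑' k : ℕ, (lam * gam) ^ k • Rmat P π ψ (k + 1)

lemma quad_vecMulVec {d : ℕ} (u v θ : Fin d → ℝ) :
    θ ⬝ᵥ (Matrix.vecMulVec u v).mulVec θ = (θ ⬝ᵥ u) * (v ⬝ᵥ θ) := by
  simp only [dotProduct, Matrix.mulVec, Matrix.vecMulVec_apply, Finset.sum_mul, Finset.mul_sum]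
  rw [Finset.sum_comm]
  congr 1; ext i; congr 1; ext j; ring

set_option maxHeartbeats 1000000 in
/-- `θᵀĀ(λ,γ)θ ≤ −(1−γ)·θᵀR(0)θ` for all `θ`. -/
theorem stmt_7 {Z : Type*} [Fintype Z] [Nonempty Z] [DecidableEq Z]
    (P : Matrix Z Z ℝ)
    (hP0 : ∀ z z', 0 ≤ P z z') (hP1 : ∀ z, ∑ z', P z z' = 1)
    (π : Z → ℝ) (hπ0 : ∀ z, 0 ≤ π z) (hπ1 : ∑ z, π z = 1)
    (hinv : ∀ z', ∑ z, π z * P z z' = π z')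
    {d : ℕ} (hd : 1 ≤ d) (ψ : Z → Fin d → ℝ)
    (lam gam : ℝ) (hlam : lam ∈ Set.Icc (0 : ℝ) 1) (hgam : gam ∈ Set.Ico (0 : ℝ) 1)
    (hlg : lam * gam < 1) :
    ∀ θ : Fin d → ℝ,
      θ ⬝ᵥ (Abar P π ψ lam gam).mulVec θ ≤
        -(1 - gam) * (θ ⬝ᵥ (Rmat P π ψ 0).mulVec θ) := by
  intro θ
  obtain ⟨hlam0, hlam1⟩ := hlam
  obtain ⟨hgam0, hgam1⟩ := hgam
  set r : ℝ := lam * gam with hr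
  have hr0 : 0 ≤ r := mul_nonneg hlam0 hgam0
  have hr1 : r < 1 := hlg
  -- basic facts about powers of P
  have hPk0 : ∀ k z z', 0 ≤ (P ^ k) z z' := by
    intro k
    induction k with
    | zero =>
      intro z z'
      simp only [pow_zero, Matrix.one_apply]
      split <;> norm_num
    | succ n ih =>
      intro z z'
      rw [pow_succ, Matrix.mul_apply]
      exact Finset.sum_nonneg fun y _ => mul_nonneg (ih z y) (hP0 y z')
  have hPk1 : ∀ k z, ∑ z', (P ^ k) z z' = 1 := by
    intro k
    induction k with
    | zero => intro z; simp [Matrix.one_apply]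
    | succ n ih =>
      intro z
      simp only [pow_succ, Matrix.mul_apply]
      rw [Finset.sum_comm]
      calc ∑ y, ∑ z', (P ^ n) z y * P y z'
          = ∑ y, (P ^ n) z y * ∑ z', P y z' :=
            Finset.sum_congr rfl fun y _ => by rw [Finset.mul_sum]
        _ = 1 := by simp only [hP1, mul_one]; exact ih z
  have hPkinv : ∀ k z', ∑ z, π z * (P ^ k) z z' = π z' := by
    intro k
    induction k with
    | zero =>
      intro z'
      simp only [pow_zero, Matrix.one_apply]
      rw [Finset.sum_congr rfl (fun z _ => by
        rw [show π z * (if z = z' then (1:ℝ) else 0) = if z = z' then π z else 0 from by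
          split <;> simp])]
      simp
    | succ n ih =>
      intro z'
      simp only [pow_succ, Matrix.mul_apply, Finset.mul_sum]
      rw [Finset.sum_comm]
      calc ∑ y, ∑ z, π z * ((P ^ n) z y * P y z')
          = ∑ y, (∑ z, π z * (P ^ n) z y) * P y z' := by
            refine Finset.sum_congr rfl fun y _ => ?_
            rw [Finset.sum_mul]
            exact Finset.sum_congr rfl fun z _ => by ring
        _ = π z' := by simp only [ih]; exact hinv z'
  have hπle1 : ∀ z, π z ≤ 1 := by
    intro z
    rw [← hπ1]
    exact Finset.single_le_sum (fun i _ => hπ0 i) (Finset.mem_univ z)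
  have hPkle1 : ∀ k z z', (P ^ k) z z' ≤ 1 := by
    intro k z z'
    rw [← hPk1 k z]
    exact Finset.single_le_sum (fun i _ => hPk0 k z i) (Finset.mem_univ z')
  have hcle1 : ∀ k z z', |π z * (P ^ k) z z'| ≤ 1 := by
    intro k z z'
    rw [abs_of_nonneg (mul_nonneg (hπ0 z) (hPk0 k z z'))]
    calc π z * (P ^ k) z z' ≤ 1 * 1 :=
        mul_le_mul (hπle1 z) (hPkle1 k z z') (hPk0 k z z') zero_le_one
      _ = 1 := one_mul 1
  -- the quadratic form as a linear map
  set f : Z → ℝ := fun z => θ ⬝ᵥ ψ z with hf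
  have hfg : ∀ z, ψ z ⬝ᵥ θ = f z := fun z => dotProduct_comm _ _
  set a : ℕ → ℝ := fun k => ∑ z, ∑ z', π z * (P ^ k) z z' * (f z * f z') with ha
  set L : Matrix (Fin d) (Fin d) ℝ →ₗ[ℝ] ℝ :=
    { toFun := fun A => θ ⬝ᵥ A.mulVec θ
      map_add' := by intro A B; simp [Matrix.add_mulVec, dotProduct_add]
      map_smul' := by intro c A; simp [Matrix.smul_mulVec] } with hL
  have hLA : ∀ A : Matrix (Fin d) (Fin d) ℝ, L A = θ ⬝ᵥ A.mulVec θ := fun A => rfl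
  have hLR : ∀ k, L (Rmat P π ψ k) = a k := by
    intro k
    unfold Rmat
    rw [map_sum]
    refine Finset.sum_congr rfl fun z _ => ?_
    rw [map_sum]
    refine Finset.sum_congr rfl fun z' _ => ?_
    rw [_root_.map_smul, smul_eq_mul, hLA, quad_vecMulVec, hfg z']
  -- bounds on a k
  have ha0 : a 0 = ∑ z, π z * (f z * f z) := by
    refine Finset.sum_congr rfl fun z _ => ?_
    simp only [pow_zero, Matrix.one_apply]
    rw [Finset.sum_congr rfl (fun z' _ => by
      rw [show π z * (if z = z' then (1:ℝ) else 0) * (f z * f z')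
          = if z' = z then π z * (f z * f z) else 0 from by
        by_cases h : z = z' <;> simp [h, eq_comm] <;> try ring])]
    simp
  have ha0nn : 0 ≤ a 0 := by
    rw [ha0]
    exact Finset.sum_nonneg fun z _ => mul_nonneg (hπ0 z) (mul_self_nonneg _)
  have hbound : ∀ k, |a k| ≤ a 0 := by
    intro k
    have key : ∀ (s : ℝ), s = 1 ∨ s = -1 → s * a k ≤ a 0 := by
      intro s hs
      have habs : ∀ z z', s * (π z * (P ^ k) z z' * (f z * f z')) ≤
          π z * (P ^ k) z z' * ((f z * f z + f z' * f z') / 2) := by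
        intro z z'
        have h1 : 0 ≤ π z * (P ^ k) z z' := mul_nonneg (hπ0 z) (hPk0 k z z')
        rcases hs with h | h <;> subst h <;>
          nlinarith [sq_nonneg (f z - f z'), sq_nonneg (f z + f z')]
      have hsum1 : ∀ z, ∑ z', π z * (P ^ k) z z' * (f z * f z) = π z * (f z * f z) := by
        intro z
        calc ∑ z', π z * (P ^ k) z z' * (f z * f z)
            = (∑ z', (P ^ k) z z') * (π z * (f z * f z)) := by
              rw [Finset.sum_mul]
              exact Finset.sum_congr rfl fun z' _ => by ring
          _ = π z * (f z * f z) := by rw [hPk1 k z, one_mul]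
      have hsum2 : ∀ z', ∑ z, π z * (P ^ k) z z' * (f z' * f z') = π z' * (f z' * f z') := by
        intro z'
        calc ∑ z, π z * (P ^ k) z z' * (f z' * f z')
            = (∑ z, π z * (P ^ k) z z') * (f z' * f z') := by rw [Finset.sum_mul]
          _ = π z' * (f z' * f z') := by rw [hPkinv k z']
      calc s * a k = ∑ z, ∑ z', s * (π z * (P ^ k) z z' * (f z * f z')) := by
            rw [ha, Finset.mul_sum]
            exact Finset.sum_congr rfl fun z _ => by rw [Finset.mul_sum]
        _ ≤ ∑ z, ∑ z', π z * (P ^ k) z z' * ((f z * f z + f z' * f z') / 2) :=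
            Finset.sum_le_sum fun z _ => Finset.sum_le_sum fun z' _ => habs z z'
        _ = (∑ z, ∑ z', π z * (P ^ k) z z' * (f z * f z)) / 2
            + (∑ z, ∑ z', π z * (P ^ k) z z' * (f z' * f z')) / 2 := by
            rw [Finset.sum_div, Finset.sum_div, ← Finset.sum_add_distrib]
            refine Finset.sum_congr rfl fun z _ => ?_
            rw [Finset.sum_div, Finset.sum_div, ← Finset.sum_add_distrib]
            exact Finset.sum_congr rfl fun z' _ => by ring
        _ = a 0 := by
            rw [Finset.sum_congr rfl fun z _ => hsum1 z,
              Finset.sum_comm, Finset.sum_congr rfl fun z' _ => hsum2 z', ha0]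
            ring
    have h1 := key 1 (Or.inl rfl)
    have h2 := key (-1) (Or.inr rfl)
    rw [abs_le]
    constructor <;> linarith
  -- entrywise description of Rmat and its boundedness
  have hRentry : ∀ n (i j : Fin d),
      Rmat P π ψ n i j = ∑ z, ∑ z', π z * (P ^ n) z z' * (ψ z i * ψ z' j) := by
    intro n i j
    unfold Rmat
    simp [Matrix.sum_apply, Matrix.vecMulVec_apply, mul_assoc]
  have hRb : ∀ n (i j : Fin d), |Rmat P π ψ n i j| ≤ ∑ z, ∑ z', |ψ z i * ψ z' j| := by
    intro n i j
    rw [hRentry]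
    calc |∑ z, ∑ z', π z * (P ^ n) z z' * (ψ z i * ψ z' j)|
        ≤ ∑ z, |∑ z', π z * (P ^ n) z z' * (ψ z i * ψ z' j)| :=
          Finset.abs_sum_le_sum_abs _ _
      _ ≤ ∑ z, ∑ z', |π z * (P ^ n) z z' * (ψ z i * ψ z' j)| :=
          Finset.sum_le_sum fun z _ => Finset.abs_sum_le_sum_abs _ _
      _ ≤ ∑ z, ∑ z', |ψ z i * ψ z' j| := by
          refine Finset.sum_le_sum fun z _ => Finset.sum_le_sum fun z' _ => ?_
          rw [abs_mul]
          calc |π z * (P ^ n) z z'| * |ψ z i * ψ z' j|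
              ≤ 1 * |ψ z i * ψ z' j| :=
                mul_le_mul_of_nonneg_right (hcle1 n z z') (abs_nonneg _)
            _ = |ψ z i * ψ z' j| := one_mul _
  -- summability of the matrix series
  have hsummat : ∀ m : ℕ, Summable (fun k : ℕ => r ^ k • Rmat P π ψ (k + m)) := by
    intro m
    refine Pi.summable.mpr fun i => Pi.summable.mpr fun j => ?_
    apply Summable.of_abs
    refine Summable.of_nonneg_of_le (fun k => abs_nonneg _) (fun k => ?_)
      ((summable_geometric_of_lt_one hr0 hr1).mul_right (∑ z, ∑ z', |ψ z i * ψ z' j|))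
    have hentry : (r ^ k • Rmat P π ψ (k + m)) i j = r ^ k * Rmat P π ψ (k + m) i j := rfl
    rw [hentry, abs_mul, abs_of_nonneg (pow_nonneg hr0 k)]
    exact mul_le_mul_of_nonneg_left (hRb _ i j) (pow_nonneg hr0 k)
  have hsum0 : Summable (fun k : ℕ => r ^ k • Rmat P π ψ k) := by
    simpa using hsummat 0
  have hsum1 : Summable (fun k : ℕ => r ^ k • Rmat P π ψ (k + 1)) := hsummat 1
  -- scalar summability
  have hgeoa : Summable (fun k : ℕ => r ^ k * a 0) :=
    (summable_geometric_of_lt_one hr0 hr1).mul_right _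
  have hsuma : ∀ m : ℕ, Summable (fun k : ℕ => r ^ k * a (k + m)) := by
    intro m
    apply Summable.of_abs
    refine Summable.of_nonneg_of_le (fun k => abs_nonneg _) (fun k => ?_) hgeoa
    rw [abs_mul, abs_of_nonneg (pow_nonneg hr0 k)]
    exact mul_le_mul_of_nonneg_left (hbound _) (pow_nonneg hr0 k)
  have hsuma0 : Summable (fun k : ℕ => r ^ k * a k) := by simpa using hsuma 0
  have hsuma1 : Summable (fun k : ℕ => r ^ k * a (k + 1)) := hsuma 1
  -- push the quadratic form through the tsums
  have hT : ∀ (F : ℕ → Matrix (Fin d) (Fin d) ℝ), Summable F →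
      L (∑' k, F k) = ∑' k, L (F k) := by
    intro F hF
    exact (LinearMap.toContinuousLinearMap L).map_tsum hF
  have hT0 : L (∑' k : ℕ, r ^ k • Rmat P π ψ k) = ∑' k : ℕ, r ^ k * a k := by
    rw [hT _ hsum0]
    congr 1; ext k; rw [_root_.map_smul, smul_eq_mul, hLR]
  have hT1 : L (∑' k : ℕ, r ^ k • Rmat P π ψ (k + 1)) = ∑' k : ℕ, r ^ k * a (k + 1) := by
    rw [hT _ hsum1]
    congr 1; ext k; rw [_root_.map_smul, smul_eq_mul, hLR]
  have hquad : θ ⬝ᵥ (Abar P π ψ lam gam).mulVec θ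
      = -(∑' k : ℕ, r ^ k * a k) + gam * ∑' k : ℕ, r ^ k * a (k + 1) := by
    have h : θ ⬝ᵥ (Abar P π ψ lam gam).mulVec θ = L (Abar P π ψ lam gam) := rfl
    rw [h]
    unfold Abar
    rw [map_add, map_neg, _root_.map_smul, smul_eq_mul, ← hr, hT0, hT1]
  -- the series identity: S₀ = a 0 + r * S
  set S : ℝ := ∑' k : ℕ, r ^ k * a (k + 1) with hS
  have hS0 : (∑' k : ℕ, r ^ k * a k) = a 0 + r * S := by
    rw [Summable.tsum_eq_zero_add hsuma0]
    simp only [pow_zero, one_mul]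
    congr 1
    rw [hS, ← tsum_mul_left]
    congr 1; ext k; ring
  -- bound S
  have hSle : S ≤ (1 - r)⁻¹ * a 0 := by
    have h1 : S ≤ ∑' k : ℕ, r ^ k * a 0 := by
      refine Summable.tsum_le_tsum (fun k => ?_) hsuma1 hgeoa
      exact mul_le_mul_of_nonneg_left
        (le_trans (le_abs_self _) (hbound (k + 1))) (pow_nonneg hr0 k)
    calc S ≤ ∑' k : ℕ, r ^ k * a 0 := h1
      _ = (1 - r)⁻¹ * a 0 := by
        rw [tsum_mul_right, tsum_geometric_of_lt_one hr0 hr1]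
  -- final arithmetic
  have hRm0 : θ ⬝ᵥ (Rmat P π ψ 0).mulVec θ = a 0 := hLR 0
  rw [hquad, hS0, hRm0]
  have h1r : 0 < 1 - r := by linarith
  have hcnn : 0 ≤ gam - r := by
    rw [hr]; nlinarith
  have hrewrite : -(a 0 + r * S) + gam * S = -(a 0) + (gam - r) * S := by ring
  rw [hrewrite]
  have hstep : (gam - r) * S ≤ (gam - r) * ((1 - r)⁻¹ * a 0) :=
    mul_le_mul_of_nonneg_left hSle hcnn
  have hX : (gam - r) * (1 - r)⁻¹ ≤ gam := by
    have hgr : gam * r ≤ r := by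
      calc gam * r ≤ 1 * r := mul_le_mul_of_nonneg_right (le_of_lt hgam1) hr0
        _ = r := one_mul r
    have h4 : gam - r ≤ gam * (1 - r) := by
      have h5 : gam * (1 - r) = gam - gam * r := by ring
      linarith
    have h6 : (gam - r) * (1 - r)⁻¹ ≤ (gam * (1 - r)) * (1 - r)⁻¹ :=
      mul_le_mul_of_nonneg_right h4 (le_of_lt (inv_pos.mpr h1r))
    have h7 : (gam * (1 - r)) * (1 - r)⁻¹ = gam := by
      rw [mul_assoc, mul_inv_cancel₀ (ne_of_gt h1r), mul_one]
    linarith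
  have hfinal : -(a 0) + (gam - r) * ((1 - r)⁻¹ * a 0) ≤ -(1 - gam) * a 0 := by
    have h2 : (gam - r) * ((1 - r)⁻¹ * a 0) = ((gam - r) * (1 - r)⁻¹) * a 0 := by ring
    have h3 : ((gam - r) * (1 - r)⁻¹) * a 0 ≤ gam * a 0 :=
      mul_le_mul_of_nonneg_right hX ha0nn
    rw [h2]
    linarith
  linarith
end

section
/- Suppose π(z) > 0 for all z. Fix β ∈ [0,1) and let S_β be the additive reversibilization of K_β with respect to π. Suppose c ≥ 0 is such that ⟨g, g − S_β g⟩_π ≥ c·⟨g,g⟩_π for every g : Z → ℝ with ⟨g, 1⟩_π = 0. Then for every θ ∈ ℝ^d, θᵀM_β θ ≥ c·θᵀΣ(0)θ. -/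
open Matrix Finset

section Stmt10Aux

variable {Z : Type*} [Fintype Z] [DecidableEq Z]

lemma myquad {n : Type*} [Fintype n] (θ : n → ℝ) (M : Matrix n n ℝ) :
    θ ⬝ᵥ M.mulVec θ = ∑ a, ∑ b, θ a * (M a b * θ b) := by
  simp [dotProduct, Matrix.mulVec, Finset.mul_sum]

lemma my_sum_mulVec {n : Type*} [Fintype n] {ι : Type*} (s : Finset ι)
    (A : ι → Matrix n n ℝ) (x : n → ℝ) :
    (∑ i ∈ s, A i).mulVec x = ∑ i ∈ s, (A i).mulVec x :=
  map_sum (Matrix.mulVec.addMonoidHomLeft x) A s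

lemma my_dotProduct_sum {n : Type*} [Fintype n] {ι : Type*} (s : Finset ι)
    (u : n → ℝ) (v : ι → n → ℝ) :
    u ⬝ᵥ (∑ i ∈ s, v i) = ∑ i ∈ s, u ⬝ᵥ v i := by
  simp only [dotProduct, Finset.sum_apply, Finset.mul_sum]
  exact Finset.sum_comm

lemma my_sum_dotProduct {n : Type*} [Fintype n] {ι : Type*} (s : Finset ι)
    (u : n → ℝ) (v : ι → n → ℝ) :
    (∑ i ∈ s, v i) ⬝ᵥ u = ∑ i ∈ s, v i ⬝ᵥ u := by
  simp only [dotProduct, Finset.sum_apply, Finset.sum_mul]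
  exact Finset.sum_comm

lemma myquad_vecMulVec {n : Type*} [Fintype n] (θ u v : n → ℝ) :
    θ ⬝ᵥ (vecMulVec u v).mulVec θ = (θ ⬝ᵥ u) * (v ⬝ᵥ θ) := by
  simp only [dotProduct, Matrix.mulVec, vecMulVec_apply, Finset.sum_mul_sum]
  exact Finset.sum_congr rfl fun a _ => by
    rw [Finset.mul_sum]
    exact Finset.sum_congr rfl fun b _ => by ring

lemma pow_entry_nonneg (P : Matrix Z Z ℝ) (hP0 : ∀ z z', 0 ≤ P z z') :
    ∀ (k : ℕ) z z', 0 ≤ (P ^ k) z z' := by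
  intro k
  induction k with
  | zero =>
    intro z z'
    rw [pow_zero, Matrix.one_apply]
    split <;> norm_num
  | succ n ih =>
    intro z z'
    rw [pow_succ, Matrix.mul_apply]
    exact Finset.sum_nonneg fun y _ => mul_nonneg (ih z y) (hP0 y z')

lemma pow_row_sum (P : Matrix Z Z ℝ) (hP1 : ∀ z, ∑ z', P z z' = 1) :
    ∀ (k : ℕ) z, ∑ z', (P ^ k) z z' = 1 := by
  intro k
  induction k with
  | zero => intro z; simp [Matrix.one_apply]
  | succ n ih =>
    intro z
    rw [pow_succ]
    simp only [Matrix.mul_apply]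
    rw [Finset.sum_comm]
    simp_rw [← Finset.mul_sum, hP1, mul_one]
    exact ih z

lemma pow_inv (P : Matrix Z Z ℝ) (π : Z → ℝ)
    (hinv : ∀ z', ∑ z, π z * P z z' = π z') :
    ∀ (k : ℕ) z', ∑ z, π z * (P ^ k) z z' = π z' := by
  intro k
  induction k with
  | zero => intro z'; simp [Matrix.one_apply]
  | succ n ih =>
    intro z'
    rw [pow_succ]
    simp_rw [Matrix.mul_apply, Finset.mul_sum]
    rw [Finset.sum_comm]
    simp_rw [← mul_assoc]
    calc ∑ y, ∑ z, π z * (P ^ n) z y * P y z'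
        = ∑ y, (∑ z, π z * (P ^ n) z y) * P y z' := by
          simp_rw [Finset.sum_mul]
      _ = ∑ y, π y * P y z' := by simp_rw [ih]
      _ = π z' := hinv z'

lemma pow_entry_le_one (P : Matrix Z Z ℝ) (hP0 : ∀ z z', 0 ≤ P z z')
    (hP1 : ∀ z, ∑ z', P z z' = 1) :
    ∀ (k : ℕ) z z', (P ^ k) z z' ≤ 1 := by
  intro k z z'
  calc (P ^ k) z z' ≤ ∑ y, (P ^ k) z y :=
        Finset.single_le_sum (fun y _ => pow_entry_nonneg P hP0 k z y)
          (Finset.mem_univ z')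
    _ = 1 := pow_row_sum P hP1 k z

lemma sum_tsum_swap {α : Type*} [Fintype α] (F : ℕ → α → ℝ)
    (h : ∀ a, Summable fun k => F k a) :
    ∑ a, ∑' k, F k a = ∑' k, ∑ a, F k a :=
  (Summable.tsum_finsetSum fun a _ => h a).symm

lemma myquad_tsum {n : Type*} [Fintype n] (θ : n → ℝ) (A : ℕ → Matrix n n ℝ)
    (hA : Summable A) :
    θ ⬝ᵥ (∑' k, A k).mulVec θ = ∑' k, θ ⬝ᵥ (A k).mulVec θ := by
  have h1 : ∀ a, Summable fun k => A k a := Pi.summable.mp hA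
  have h2 : ∀ a b, Summable fun k => A k a b := fun a => Pi.summable.mp (h1 a)
  have hentry : ∀ a b, (∑' k, A k) a b = ∑' k, A k a b := fun a b => by
    erw [tsum_apply hA, tsum_apply (h1 a)]
  rw [myquad]
  simp_rw [hentry, ← tsum_mul_right, ← tsum_mul_left]
  have step1 : ∀ a, ∑ b, ∑' k, θ a * (A k a b * θ b)
      = ∑' k, ∑ b, θ a * (A k a b * θ b) := fun a =>
    sum_tsum_swap _ (fun b => ((h2 a b).mul_right (θ b)).mul_left (θ a))
  simp_rw [step1]
  rw [sum_tsum_swap _ (fun a => summable_sum fun b _ =>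
    ((h2 a b).mul_right (θ b)).mul_left (θ a))]
  exact tsum_congr fun k => (myquad θ (A k)).symm

/-- Centered quadratic form identity. -/
lemma centered_quad (Q : Matrix Z Z ℝ) (π f : Z → ℝ)
    (hrow : ∀ z, ∑ z', Q z z' = 1) (hinvQ : ∀ z', ∑ z, π z * Q z z' = π z')
    (hπ1 : ∑ z, π z = 1) :
    ∑ z, ∑ z', π z * Q z z' * ((f z - (∑ y, π y * f y)) * (f z' - (∑ y, π y * f y)))
      = (∑ z, ∑ z', π z * Q z z' * (f z * f z'))
        - (∑ y, π y * f y) * (∑ y, π y * f y) := by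
  set m : ℝ := ∑ y, π y * f y with hm
  have hT2 : ∑ z, ∑ z', π z * Q z z' * f z = m := by
    rw [hm]
    refine Finset.sum_congr rfl fun z _ => ?_
    have e : ∀ z', π z * Q z z' * f z = (π z * f z) * Q z z' := fun z' => by ring
    simp_rw [e, ← Finset.mul_sum, hrow, mul_one]
  have hT3 : ∑ z, ∑ z', π z * Q z z' * f z' = m := by
    rw [Finset.sum_comm, hm]
    refine Finset.sum_congr rfl fun z' _ => ?_
    rw [← Finset.sum_mul, hinvQ]
  have hT4 : ∑ z, ∑ z', π z * Q z z' = 1 := by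
    have e : ∀ z, ∑ z', π z * Q z z' = π z := fun z => by
      rw [← Finset.mul_sum, hrow, mul_one]
    simp_rw [e]; exact hπ1
  have key : ∀ z z', π z * Q z z' * ((f z - m) * (f z' - m))
      = π z * Q z z' * (f z * f z') - m * (π z * Q z z' * f z)
        - m * (π z * Q z z' * f z') + (m * m) * (π z * Q z z') := fun z z' => by ring
  calc ∑ z, ∑ z', π z * Q z z' * ((f z - m) * (f z' - m))
      = ∑ z, ((∑ z', π z * Q z z' * (f z * f z'))
          - m * (∑ z', π z * Q z z' * f z)
          - m * (∑ z', π z * Q z z' * f z')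
          + (m * m) * (∑ z', π z * Q z z')) := by
        refine Finset.sum_congr rfl fun z _ => ?_
        simp_rw [key, Finset.sum_add_distrib, Finset.sum_sub_distrib,
          ← Finset.mul_sum]
    _ = (∑ z, ∑ z', π z * Q z z' * (f z * f z'))
          - m * (∑ z, ∑ z', π z * Q z z' * f z)
          - m * (∑ z, ∑ z', π z * Q z z' * f z')
          + (m * m) * (∑ z, ∑ z', π z * Q z z') := by
        simp_rw [Finset.sum_add_distrib, Finset.sum_sub_distrib, ← Finset.mul_sum]
    _ = (∑ z, ∑ z', π z * Q z z' * (f z * f z')) - m * m := by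
        rw [hT2, hT3, hT4]; ring

end Stmt10Aux


/-- The mean feature vector `ψ̄ = ∑_z π(z) ψ(z)`. -/
noncomputable def psibar {Z : Type*} [Fintype Z] {d : ℕ} (π : Z → ℝ)
    (ψ : Z → Fin d → ℝ) : Fin d → ℝ :=
  ∑ z, π z • ψ z

/-- The autocovariance matrix `Σ(0) = R(0) − ψ̄ ψ̄ᵀ`. -/
noncomputable def Sigma0 {Z : Type*} [Fintype Z] [DecidableEq Z] {d : ℕ}
    (P : Matrix Z Z ℝ) (π : Z → ℝ) (ψ : Z → Fin d → ℝ) :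
    Matrix (Fin d) (Fin d) ℝ :=
  Rmat P π ψ 0 - Matrix.vecMulVec (psibar π ψ) (psibar π ψ)

/-- The transition matrix `K_β = (1−β) ∑_{k≥0} β^k P^{k+1}`. -/
noncomputable def Kmat {Z : Type*} [Fintype Z] [DecidableEq Z]
    (P : Matrix Z Z ℝ) (β : ℝ) : Matrix Z Z ℝ :=
  (1 - β) • ∑' k : ℕ, β ^ k • P ^ (k + 1)

/-- The matrix `M_β = R(0) − (1−β) ∑_{k≥0} β^k R(k+1)`. -/
noncomputable def Mmat {Z : Type*} [Fintype Z] [DecidableEq Z] {d : ℕ}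
    (P : Matrix Z Z ℝ) (π : Z → ℝ) (ψ : Z → Fin d → ℝ) (β : ℝ) :
    Matrix (Fin d) (Fin d) ℝ :=
  Rmat P π ψ 0 - (1 - β) • ∑' k : ℕ, β ^ k • Rmat P π ψ (k + 1)

/-- The `π`-adjoint `K*(z,z') = π(z') K(z',z) / π(z)` of a transition matrix. -/
noncomputable def piAdjoint {Z : Type*} [Fintype Z] (π : Z → ℝ)
    (K : Matrix Z Z ℝ) : Matrix Z Z ℝ :=
  Matrix.of fun z z' => π z' * K z' z / π z

/-- The additive reversibilization `S = (K + K*)/2`. -/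
noncomputable def reversib {Z : Type*} [Fintype Z] (π : Z → ℝ)
    (K : Matrix Z Z ℝ) : Matrix Z Z ℝ :=
  (2 : ℝ)⁻¹ • (K + piAdjoint π K)

/-- a Poincaré inequality for the additive reversibilization `S_β`
of `K_β` yields `θᵀM_β θ ≥ c·θᵀΣ(0)θ` for all `θ`. -/
theorem stmt_10 {Z : Type*} [Fintype Z] [Nonempty Z] [DecidableEq Z]
    (P : Matrix Z Z ℝ)
    (hP0 : ∀ z z', 0 ≤ P z z') (hP1 : ∀ z, ∑ z', P z z' = 1)
    (π : Z → ℝ) (hπpos : ∀ z, 0 < π z) (hπ1 : ∑ z, π z = 1)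
    (hinv : ∀ z', ∑ z, π z * P z z' = π z')
    {d : ℕ} (hd : 1 ≤ d) (ψ : Z → Fin d → ℝ)
    (β : ℝ) (hβ : β ∈ Set.Ico (0 : ℝ) 1)
    (c : ℝ) (hc : 0 ≤ c)
    (hPoincare : ∀ g : Z → ℝ, (∑ z, π z * (g z * 1)) = 0 →
      c * ∑ z, π z * (g z * g z) ≤
        ∑ z, π z * (g z * (g z - (reversib π (Kmat P β)).mulVec g z))) :
    ∀ θ : Fin d → ℝ,
      c * (θ ⬝ᵥ (Sigma0 P π ψ).mulVec θ) ≤ θ ⬝ᵥ (Mmat P π ψ β).mulVec θ := by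
  obtain ⟨hβ0, hβ1⟩ := hβ
  intro θ
  have hβne : (1 : ℝ) - β ≠ 0 := by linarith
  -- notation
  set f : Z → ℝ := fun z => ψ z ⬝ᵥ θ with hfdef
  set m : ℝ := ∑ y, π y * f y with hmdef
  set g : Z → ℝ := fun z => f z - m with hgdef
  set r : ℕ → ℝ := fun j => ∑ z, ∑ z', π z * (P ^ j) z z' * (f z * f z') with hrdef
  -- basic facts about powers of P
  have hPk0 := pow_entry_nonneg P hP0
  have hPk1 := pow_row_sum P hP1
  have hPkinv := pow_inv P π hinv
  have hPkle := pow_entry_le_one P hP0 hP1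
  have hπle1 : ∀ z, π z ≤ 1 := fun z => by
    calc π z ≤ ∑ y, π y :=
          Finset.single_le_sum (fun y _ => (hπpos y).le) (Finset.mem_univ z)
      _ = 1 := hπ1
  have hgeoSummable : Summable fun k : ℕ => β ^ k :=
    summable_geometric_of_lt_one hβ0 hβ1
  -- quadratic form of Rmat
  have hquadR : ∀ j, θ ⬝ᵥ (Rmat P π ψ j).mulVec θ = r j := by
    intro j
    simp only [Rmat, my_sum_mulVec, Matrix.smul_mulVec, my_dotProduct_sum,
      dotProduct_smul, smul_eq_mul, myquad_vecMulVec, hrdef]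
    refine Finset.sum_congr rfl fun z _ => Finset.sum_congr rfl fun z' _ => ?_
    rw [dotProduct_comm θ (ψ z)]
  have hr0 : r 0 = ∑ z, π z * (f z * f z) := by
    rw [hrdef]
    refine Finset.sum_congr rfl fun z _ => ?_
    rw [pow_zero]
    simp [Matrix.one_apply]
  -- Sigma0 quadratic form
  have hpsibar : psibar π ψ ⬝ᵥ θ = m := by
    rw [psibar, my_sum_dotProduct]
    simp only [smul_dotProduct, smul_eq_mul]
    rfl
  have hpsibar' : θ ⬝ᵥ psibar π ψ = m := by rw [dotProduct_comm]; exact hpsibar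
  have hquadSigma : θ ⬝ᵥ (Sigma0 P π ψ).mulVec θ
      = (∑ z, π z * (f z * f z)) - m * m := by
    rw [Sigma0, Matrix.sub_mulVec, dotProduct_sub, hquadR 0, hr0,
      myquad_vecMulVec, hpsibar, hpsibar']
  -- summability of the matrix series
  have hKentrySummable : ∀ z z', Summable fun k => β ^ k * (P ^ (k + 1)) z z' := by
    intro z z'
    refine Summable.of_nonneg_of_le
      (fun k => mul_nonneg (pow_nonneg hβ0 k) (hPk0 _ z z')) (fun k => ?_)
      hgeoSummable
    calc β ^ k * (P ^ (k + 1)) z z' ≤ β ^ k * 1 :=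
          mul_le_mul_of_nonneg_left (hPkle _ z z') (pow_nonneg hβ0 k)
      _ = β ^ k := mul_one _
  have hKsum : Summable fun k => β ^ k • P ^ (k + 1) := by
    erw [Pi.summable]; intro z; rw [Pi.summable]; intro z'
    simpa [Matrix.smul_apply, smul_eq_mul] using hKentrySummable z z'
  have hKentry : ∀ z z', Kmat P β z z' = (1 - β) * ∑' k, β ^ k * (P ^ (k + 1)) z z' := by
    intro z z'
    have h1 : (∑' k, β ^ k • P ^ (k + 1)) z z'
        = ∑' k, (β ^ k • P ^ (k + 1)) z z' := by
      erw [tsum_apply hKsum, tsum_apply (Pi.summable.mp hKsum z)]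
    rw [Kmat, Matrix.smul_apply, smul_eq_mul, h1]
    congr 1
  -- Rmat entries and bound
  have hRentry : ∀ j a b, Rmat P π ψ j a b
      = ∑ z, ∑ z', π z * (P ^ j) z z' * (ψ z a * ψ z' b) := by
    intro j a b
    simp [Rmat, Matrix.sum_apply, Matrix.smul_apply, vecMulVec_apply, smul_eq_mul]
  have hRbound : ∀ j a b, |Rmat P π ψ j a b| ≤ ∑ z, ∑ z', |ψ z a| * |ψ z' b| := by
    intro j a b
    rw [hRentry]
    calc |∑ z, ∑ z', π z * (P ^ j) z z' * (ψ z a * ψ z' b)|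
        ≤ ∑ z, |∑ z', π z * (P ^ j) z z' * (ψ z a * ψ z' b)| :=
          Finset.abs_sum_le_sum_abs _ _
      _ ≤ ∑ z, ∑ z', |π z * (P ^ j) z z' * (ψ z a * ψ z' b)| :=
          Finset.sum_le_sum fun z _ => Finset.abs_sum_le_sum_abs _ _
      _ ≤ ∑ z, ∑ z', |ψ z a| * |ψ z' b| := by
          refine Finset.sum_le_sum fun z _ => Finset.sum_le_sum fun z' _ => ?_
          rw [abs_mul, abs_mul (ψ z a)]
          have h1 : |π z * (P ^ j) z z'| ≤ 1 := by
            rw [abs_of_nonneg (mul_nonneg (hπpos z).le (hPk0 j z z'))]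
            calc π z * (P ^ j) z z' ≤ 1 * 1 :=
                  mul_le_mul (hπle1 z) (hPkle j z z') (hPk0 j z z') zero_le_one
              _ = 1 := mul_one 1
          calc |π z * (P ^ j) z z'| * (|ψ z a| * |ψ z' b|)
              ≤ 1 * (|ψ z a| * |ψ z' b|) :=
                mul_le_mul_of_nonneg_right h1
                  (mul_nonneg (abs_nonneg _) (abs_nonneg _))
            _ = |ψ z a| * |ψ z' b| := one_mul _
  have hRsum : Summable fun k => β ^ k • Rmat P π ψ (k + 1) := by
    erw [Pi.summable]; intro a; rw [Pi.summable]; intro b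
    refine Summable.of_abs ?_
    refine Summable.of_nonneg_of_le (fun k => abs_nonneg _) (fun k => ?_)
      (hgeoSummable.mul_right (∑ z, ∑ z', |ψ z a| * |ψ z' b|))
    simp only [Matrix.smul_apply, smul_eq_mul, abs_mul,
      abs_of_nonneg (pow_nonneg hβ0 _)]
    exact mul_le_mul_of_nonneg_left (hRbound _ a b) (pow_nonneg hβ0 _)
  -- quadratic form of Mmat
  have hquadRsmul : ∀ k, θ ⬝ᵥ (β ^ k • Rmat P π ψ (k + 1)).mulVec θ
      = β ^ k * r (k + 1) := fun k => by
    rw [Matrix.smul_mulVec, dotProduct_smul, smul_eq_mul, hquadR]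
  have hquadM : θ ⬝ᵥ (Mmat P π ψ β).mulVec θ
      = (∑ z, π z * (f z * f z)) - (1 - β) * ∑' k, β ^ k * r (k + 1) := by
    rw [Mmat, Matrix.sub_mulVec, dotProduct_sub, hquadR 0, hr0,
      Matrix.smul_mulVec, dotProduct_smul, smul_eq_mul,
      myquad_tsum θ _ hRsum]
    congr 2
    exact tsum_congr hquadRsmul
  -- summability of scalar series
  have hrbound : ∀ j, |r j| ≤ ∑ z, ∑ z', |f z| * |f z'| := by
    intro j
    rw [hrdef]
    calc |∑ z, ∑ z', π z * (P ^ j) z z' * (f z * f z')|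
        ≤ ∑ z, |∑ z', π z * (P ^ j) z z' * (f z * f z')| :=
          Finset.abs_sum_le_sum_abs _ _
      _ ≤ ∑ z, ∑ z', |π z * (P ^ j) z z' * (f z * f z')| :=
          Finset.sum_le_sum fun z _ => Finset.abs_sum_le_sum_abs _ _
      _ ≤ ∑ z, ∑ z', |f z| * |f z'| := by
          refine Finset.sum_le_sum fun z _ => Finset.sum_le_sum fun z' _ => ?_
          rw [abs_mul, abs_mul (f z)]
          have h1 : |π z * (P ^ j) z z'| ≤ 1 := by
            rw [abs_of_nonneg (mul_nonneg (hπpos z).le (hPk0 j z z'))]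
            calc π z * (P ^ j) z z' ≤ 1 * 1 :=
                  mul_le_mul (hπle1 z) (hPkle j z z') (hPk0 j z z') zero_le_one
              _ = 1 := mul_one 1
          calc |π z * (P ^ j) z z'| * (|f z| * |f z'|)
              ≤ 1 * (|f z| * |f z'|) :=
                mul_le_mul_of_nonneg_right h1
                  (mul_nonneg (abs_nonneg _) (abs_nonneg _))
            _ = |f z| * |f z'| := one_mul _
  have hrsummable : Summable fun k => β ^ k * r (k + 1) := by
    refine Summable.of_abs ?_
    refine Summable.of_nonneg_of_le (fun k => abs_nonneg _) (fun k => ?_)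
      (hgeoSummable.mul_right (∑ z, ∑ z', |f z| * |f z'|))
    rw [abs_mul, abs_of_nonneg (pow_nonneg hβ0 _)]
    exact mul_le_mul_of_nonneg_left (hrbound _) (pow_nonneg hβ0 _)
  -- Poincaré hypothesis applied to g
  have hg1 : ∑ z, π z * (g z * 1) = 0 := by
    simp only [hgdef, mul_one]
    simp_rw [mul_sub]
    rw [Finset.sum_sub_distrib, ← Finset.sum_mul, hπ1, one_mul, ← hmdef, sub_self]
  have hgg : ∑ z, π z * (g z * g z) = (∑ z, π z * (f z * f z)) - m * m := by
    have e : ∀ z, π z * (g z * g z)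
        = π z * (f z * f z) - (2 * m) * (π z * f z) + (m * m) * π z := fun z => by
      simp only [hgdef]; ring
    simp_rw [e]
    rw [Finset.sum_add_distrib, Finset.sum_sub_distrib, ← Finset.mul_sum,
      ← Finset.mul_sum, hπ1, ← hmdef]
    ring
  have hPoinc := hPoincare g hg1
  -- RHS of Poincaré: split
  have hrhs_split : ∑ z, π z * (g z * (g z - (reversib π (Kmat P β)).mulVec g z))
      = (∑ z, π z * (g z * g z))
        - ∑ z, π z * (g z * (reversib π (Kmat P β)).mulVec g z) := by
    simp_rw [mul_sub]
    rw [Finset.sum_sub_distrib]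
  -- adjoint gives same quadratic form
  have hadj : ∑ z, π z * (g z * (piAdjoint π (Kmat P β)).mulVec g z)
      = ∑ z, π z * (g z * (Kmat P β).mulVec g z) := by
    calc ∑ z, π z * (g z * (piAdjoint π (Kmat P β)).mulVec g z)
        = ∑ z, ∑ z', π z' * (g z' * (Kmat P β z' z * g z)) := by
          refine Finset.sum_congr rfl fun z _ => ?_
          simp only [Matrix.mulVec, dotProduct, piAdjoint, Matrix.of_apply,
            Finset.mul_sum]
          refine Finset.sum_congr rfl fun z' _ => ?_
          have hz := (hπpos z).ne'
          field_simp
      _ = ∑ z', ∑ z, π z' * (g z' * (Kmat P β z' z * g z)) := Finset.sum_comm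
      _ = ∑ z, π z * (g z * (Kmat P β).mulVec g z) := by
          refine Finset.sum_congr rfl fun z' _ => ?_
          simp only [Matrix.mulVec, dotProduct, Finset.mul_sum]
  -- reversibilization gives same quadratic form as Kmat
  have hSrev : ∑ z, π z * (g z * (reversib π (Kmat P β)).mulVec g z)
      = ∑ z, π z * (g z * (Kmat P β).mulVec g z) := by
    have e : ∀ z, π z * (g z * (reversib π (Kmat P β)).mulVec g z)
        = (2 : ℝ)⁻¹ * (π z * (g z * (Kmat P β).mulVec g z))
          + (2 : ℝ)⁻¹ * (π z * (g z * (piAdjoint π (Kmat P β)).mulVec g z)) := by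
      intro z
      rw [reversib, Matrix.smul_mulVec, Matrix.add_mulVec]
      simp only [Pi.smul_apply, Pi.add_apply, smul_eq_mul]
      ring
    simp_rw [e]
    rw [Finset.sum_add_distrib, ← Finset.mul_sum, ← Finset.mul_sum, hadj]
    ring
  -- Kmat quadratic form as a series
  have hsummzz : ∀ z z' : Z, Summable fun k =>
      (π z * (g z * g z')) * (β ^ k * (P ^ (k + 1)) z z') := fun z z' =>
    (hKentrySummable z z').mul_left _
  have hKquad : ∑ z, π z * (g z * (Kmat P β).mulVec g z)
      = (1 - β) * ∑' k, β ^ k *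
          (∑ z, ∑ z', π z * (P ^ (k + 1)) z z' * (g z * g z')) := by
    calc ∑ z, π z * (g z * (Kmat P β).mulVec g z)
        = ∑ z, ∑ z', (π z * (g z * g z'))
            * ((1 - β) * ∑' k, β ^ k * (P ^ (k + 1)) z z') := by
          refine Finset.sum_congr rfl fun z _ => ?_
          simp only [Matrix.mulVec, dotProduct, Finset.mul_sum]
          refine Finset.sum_congr rfl fun z' _ => ?_
          rw [hKentry]
          ring
      _ = ∑ z, ∑ z', (1 - β) * ∑' k,
            (π z * (g z * g z')) * (β ^ k * (P ^ (k + 1)) z z') := by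
          refine Finset.sum_congr rfl fun z _ => Finset.sum_congr rfl fun z' _ => ?_
          rw [mul_left_comm, ← tsum_mul_left]
      _ = (1 - β) * ∑ z, ∑ z', ∑' k,
            (π z * (g z * g z')) * (β ^ k * (P ^ (k + 1)) z z') := by
          rw [Finset.mul_sum]
          refine Finset.sum_congr rfl fun z _ => ?_
          rw [Finset.mul_sum]
      _ = (1 - β) * ∑' k, ∑ z, ∑ z',
            (π z * (g z * g z')) * (β ^ k * (P ^ (k + 1)) z z') := by
          congr 1
          have inner : ∀ z, ∑ z', ∑' k,
              (π z * (g z * g z')) * (β ^ k * (P ^ (k + 1)) z z')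
              = ∑' k, ∑ z', (π z * (g z * g z')) * (β ^ k * (P ^ (k + 1)) z z') :=
            fun z => sum_tsum_swap _ (fun z' => hsummzz z z')
          simp_rw [inner]
          exact sum_tsum_swap _ (fun z => summable_sum fun z' _ => hsummzz z z')
      _ = (1 - β) * ∑' k, β ^ k *
            (∑ z, ∑ z', π z * (P ^ (k + 1)) z z' * (g z * g z')) := by
          congr 1
          refine tsum_congr fun k => ?_
          rw [Finset.mul_sum]
          refine Finset.sum_congr rfl fun z _ => ?_
          rw [Finset.mul_sum]
          exact Finset.sum_congr rfl fun z' _ => by ring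
  -- centered identity for each power
  have hq : ∀ j : ℕ, (∑ z, ∑ z', π z * (P ^ j) z z' * (g z * g z'))
      = r j - m * m := by
    intro j
    have := centered_quad (P ^ j) π f (hPk1 j) (hPkinv j) hπ1
    simp only [hgdef, ← hmdef] at this ⊢
    rw [this, hrdef]
  -- assemble the series identity
  have hseries : ∑' k, β ^ k *
      (∑ z, ∑ z', π z * (P ^ (k + 1)) z z' * (g z * g z'))
      = (∑' k, β ^ k * r (k + 1)) - (1 - β)⁻¹ * (m * m) := by
    have e : ∀ k : ℕ, β ^ k *
        (∑ z, ∑ z', π z * (P ^ (k + 1)) z z' * (g z * g z'))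
        = β ^ k * r (k + 1) - β ^ k * (m * m) := fun k => by
      rw [hq (k + 1)]; ring
    simp_rw [e]
    rw [Summable.tsum_sub hrsummable (hgeoSummable.mul_right (m * m)),
      tsum_mul_right, tsum_geometric_of_lt_one hβ0 hβ1]
  -- final computation
  have hRHS : ∑ z, π z * (g z * (g z - (reversib π (Kmat P β)).mulVec g z))
      = θ ⬝ᵥ (Mmat P π ψ β).mulVec θ := by
    rw [hrhs_split, hSrev, hKquad, hseries, hgg, hquadM]
    have : (1 - β) * ((1 - β)⁻¹ * (m * m)) = m * m := by
      rw [← mul_assoc, mul_inv_cancel₀ hβne, one_mul]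
    rw [mul_sub, this]
    ring
  rw [hquadSigma, ← hgg, ← hRHS]
  exact hPoinc
end

section
/- Suppose P is primitive, i.e. there exists m ≥ 1 such that (P^m)(z,z') > 0 for all z, z', and π(z) > 0 for all z. Then there exists ε > 0 such that for every β ∈ [0,1) and every g : Z → ℝ with ⟨g, 1⟩_π = 0, one has ⟨g, g − S_β g⟩_π ≥ ε·⟨g,g⟩_π, where S_β is the additive reversibilization of K_β with respect to π. -/
open Matrix

set_option linter.unusedSectionVars false
set_option maxHeartbeats 1000000

section MyAux

variable {Z : Type*} [Fintype Z] [DecidableEq Z]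

lemma my_pow_nonneg (P : Matrix Z Z ℝ) (hP0 : ∀ z z', 0 ≤ P z z') :
    ∀ k, ∀ z z', 0 ≤ (P ^ k) z z' := by
  intro k
  induction k with
  | zero => intro z z'; simp [Matrix.one_apply]; positivity
  | succ n ih =>
    intro z z'
    rw [pow_succ, Matrix.mul_apply]
    exact Finset.sum_nonneg fun y _ => mul_nonneg (ih z y) (hP0 y z')

lemma my_pow_rowsum (P : Matrix Z Z ℝ) (hP1 : ∀ z, ∑ z', P z z' = 1) :
    ∀ k, ∀ z, ∑ z', (P ^ k) z z' = 1 := by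
  intro k
  induction k with
  | zero => intro z; simp [Matrix.one_apply]
  | succ n ih =>
    intro z
    simp only [pow_succ, Matrix.mul_apply]
    rw [Finset.sum_comm]
    calc ∑ y, ∑ z', (P ^ n) z y * P y z' = ∑ y, (P ^ n) z y * ∑ z', P y z' := by
          simp [Finset.mul_sum]
      _ = 1 := by simp [hP1, ih]

lemma my_pow_inv (P : Matrix Z Z ℝ) (π : Z → ℝ)
    (hinv : ∀ z', ∑ z, π z * P z z' = π z') :
    ∀ k, ∀ z', ∑ z, π z * (P ^ k) z z' = π z' := by
  intro k
  induction k with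
  | zero => intro z'; simp [Matrix.one_apply]
  | succ n ih =>
    intro z'
    simp only [pow_succ, Matrix.mul_apply, Finset.mul_sum]
    rw [Finset.sum_comm]
    calc ∑ y, ∑ z, π z * ((P ^ n) z y * P y z')
        = ∑ y, (∑ z, π z * (P ^ n) z y) * P y z' := by
          refine Finset.sum_congr rfl fun y _ => ?_
          rw [Finset.sum_mul]
          exact Finset.sum_congr rfl fun z _ => by ring
      _ = ∑ y, π y * P y z' := by simp [ih]
      _ = π z' := hinv z'

/-- Weighted L² contraction for sub-stochastic matrices. -/
lemma my_contr (π : Z → ℝ) (hπ0 : ∀ z, 0 ≤ π z) (R : Matrix Z Z ℝ) (r : ℝ)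
    (hR0 : ∀ z z', 0 ≤ R z z') (hrow : ∀ z, ∑ z', R z z' = r)
    (hcol : ∀ z', ∑ z, π z * R z z' = r * π z') (g : Z → ℝ) :
    ∑ z, π z * (R.mulVec g z * R.mulVec g z) ≤ (r * r) * ∑ z, π z * (g z * g z) := by
  have hpt : ∀ z, R.mulVec g z * R.mulVec g z ≤ r * ∑ z', R z z' * (g z' * g z') := by
    intro z
    have := Finset.sum_sq_le_sum_mul_sum_of_sq_eq_mul (Finset.univ)
      (f := fun z' => R z z') (g := fun z' => R z z' * (g z' * g z'))
      (r := fun z' => R z z' * g z')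
      (fun i _ => hR0 z i) (fun i _ => mul_nonneg (hR0 z i) (mul_self_nonneg _))
      (fun i _ => by ring)
    rw [hrow] at this
    calc R.mulVec g z * R.mulVec g z = (∑ z', R z z' * g z') ^ 2 := by
          simp [Matrix.mulVec, dotProduct, sq]
      _ ≤ r * ∑ z', R z z' * (g z' * g z') := this
  calc ∑ z, π z * (R.mulVec g z * R.mulVec g z)
      ≤ ∑ z, π z * (r * ∑ z', R z z' * (g z' * g z')) :=
        Finset.sum_le_sum fun z _ => mul_le_mul_of_nonneg_left (hpt z) (hπ0 z)
    _ = ∑ z, ∑ z', r * ((π z * R z z') * (g z' * g z')) := by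
        refine Finset.sum_congr rfl fun z _ => ?_
        rw [Finset.mul_sum, Finset.mul_sum]
        exact Finset.sum_congr rfl fun z' _ => by ring
    _ = ∑ z', ∑ z, r * ((π z * R z z') * (g z' * g z')) := Finset.sum_comm
    _ = ∑ z', r * ((∑ z, π z * R z z') * (g z' * g z')) := by
        refine Finset.sum_congr rfl fun z' _ => ?_
        rw [← Finset.mul_sum, ← Finset.sum_mul]
    _ = (r * r) * ∑ z, π z * (g z * g z) := by
        simp only [hcol, Finset.mul_sum]
        exact Finset.sum_congr rfl fun z _ => by ring

/-- Polarization-type identity. -/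
lemma my_polar (π : Z → ℝ) (g h : Z → ℝ) :
    ∑ z, π z * (g z * g z) - ∑ z, π z * (g z * h z) =
    (2:ℝ)⁻¹ * (∑ z, π z * (g z * g z) - ∑ z, π z * (h z * h z))
      + (2:ℝ)⁻¹ * ∑ z, π z * ((g z - h z) * (g z - h z)) := by
  have key : ∑ z, π z * ((g z - h z) * (g z - h z)) =
      ∑ z, π z * (g z * g z) - 2 * ∑ z, π z * (g z * h z) + ∑ z, π z * (h z * h z) := by
    rw [Finset.mul_sum, ← Finset.sum_sub_distrib, ← Finset.sum_add_distrib]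
    exact Finset.sum_congr rfl fun z _ => by ring
  rw [key]; ring

/-- Doeblin bound: on mean-zero vectors, `P^m` contracts by `1-δ₀`. -/
lemma my_doeblin (π : Z → ℝ) (hπ0 : ∀ z, 0 ≤ π z) (hπ1 : ∑ z, π z = 1)
    (P : Matrix Z Z ℝ) (hP1 : ∀ z, ∑ z', P z z' = 1)
    (hinv : ∀ z', ∑ z, π z * P z z' = π z')
    (m : ℕ) (δ₀ : ℝ)
    (hδ : ∀ z z', δ₀ * π z' ≤ (P ^ m) z z')
    (g : Z → ℝ) (hg : ∑ z, π z * g z = 0) :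
    ∑ z, π z * ((P ^ m).mulVec g z * (P ^ m).mulVec g z) ≤
      ((1 - δ₀) * (1 - δ₀)) * ∑ z, π z * (g z * g z) := by
  set R : Matrix Z Z ℝ := Matrix.of fun z z' => (P ^ m) z z' - δ₀ * π z' with hR
  have hRapp : ∀ z z', R z z' = (P ^ m) z z' - δ₀ * π z' := fun z z' => rfl
  have hR0 : ∀ z z', 0 ≤ R z z' := fun z z' => by
    rw [hRapp]; linarith [hδ z z']
  have hrow : ∀ z, ∑ z', R z z' = 1 - δ₀ := by
    intro z
    simp only [hRapp]
    rw [Finset.sum_sub_distrib, my_pow_rowsum P hP1 m z, ← Finset.mul_sum, hπ1, mul_one]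
  have hcol : ∀ z', ∑ z, π z * R z z' = (1 - δ₀) * π z' := by
    intro z'
    have : ∀ z, π z * R z z' = π z * (P ^ m) z z' - δ₀ * π z' * π z := by
      intro z; rw [hRapp]; ring
    simp only [this]
    rw [Finset.sum_sub_distrib, my_pow_inv P π hinv m z', ← Finset.mul_sum, hπ1, mul_one]
    ring
  have hmv : R.mulVec g = (P ^ m).mulVec g := by
    funext z
    simp only [Matrix.mulVec, dotProduct, hRapp]
    have : ∀ z', ((P ^ m) z z' - δ₀ * π z') * g z'
        = (P ^ m) z z' * g z' - δ₀ * (π z' * g z') := fun z' => by ring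
    simp only [this]
    rw [Finset.sum_sub_distrib, ← Finset.mul_sum, hg, mul_zero, sub_zero]
  have := my_contr π hπ0 R (1 - δ₀) hR0 hrow hcol g
  rwa [hmv] at this


/-- Expansion of the square of a sum. -/
lemma my_sqexp (π : Z → ℝ) (g h : Z → ℝ) :
    ∑ z, π z * ((g z + h z) * (g z + h z)) =
      ∑ z, π z * (g z * g z) + 2 * ∑ z, π z * (g z * h z) + ∑ z, π z * (h z * h z) := by
  rw [Finset.mul_sum, ← Finset.sum_add_distrib, ← Finset.sum_add_distrib]
  exact Finset.sum_congr rfl fun z _ => by ring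
/-- Uniform spectral gap for the one-step Dirichlet form, by compactness. -/
lemma my_gap [Nonempty Z] (π : Z → ℝ) (hπpos : ∀ z, 0 < π z) (hπ1 : ∑ z, π z = 1)
    (P : Matrix Z Z ℝ) (hP0 : ∀ z z', 0 ≤ P z z') (hP1 : ∀ z, ∑ z', P z z' = 1)
    (hinv : ∀ z', ∑ z, π z * P z z' = π z')
    (m : ℕ) (δ₀ : ℝ) (hδpos : 0 < δ₀) (hδ1 : δ₀ ≤ 1)
    (hδ : ∀ z z', δ₀ * π z' ≤ (P ^ m) z z') :
    ∃ lam > 0, ∀ g : Z → ℝ, (∑ z, π z * g z) = 0 →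
      lam * ∑ z, π z * (g z * g z) ≤
        ∑ z, π z * (g z * g z) - ∑ z, π z * (g z * P.mulVec g z) := by
  classical
  set E : (Z → ℝ) → ℝ := fun g => ∑ z, π z * (g z * g z) with hE
  set φ : (Z → ℝ) → ℝ := fun g => E g - ∑ z, π z * (g z * P.mulVec g z) with hφ
  have hπ0 : ∀ z, 0 ≤ π z := fun z => (hπpos z).le
  have hE0 : ∀ g, 0 ≤ E g := fun g =>
    Finset.sum_nonneg fun z _ => mul_nonneg (hπ0 z) (mul_self_nonneg _)
  have hEzero : ∀ g : Z → ℝ, E g = 0 → ∀ z, g z = 0 := by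
    intro g hg z
    have h := (Finset.sum_eq_zero_iff_of_nonneg
      (fun z _ => mul_nonneg (hπ0 z) (mul_self_nonneg (g z)))).mp hg z (Finset.mem_univ z)
    have := mul_eq_zero.mp h
    rcases this with h1 | h2
    · exact absurd h1 (ne_of_gt (hπpos z))
    · exact mul_self_eq_zero.mp h2
  -- contraction of P in E
  have hEP : ∀ g : Z → ℝ, E (P.mulVec g) ≤ E g := by
    intro g
    have := my_contr π hπ0 P 1 hP0 hP1 (fun z' => by rw [one_mul]; exact hinv z') g
    simpa using this
  have hφnn : ∀ g : Z → ℝ, 0 ≤ φ g := by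
    intro g
    have hp := my_polar π g (P.mulVec g)
    have h1 : 0 ≤ E g - E (P.mulVec g) := by linarith [hEP g]
    have h2 : (0:ℝ) ≤ ∑ z, π z * ((g z - P.mulVec g z) * (g z - P.mulVec g z)) :=
      Finset.sum_nonneg fun z _ => mul_nonneg (hπ0 z) (mul_self_nonneg _)
    have : φ g = (2:ℝ)⁻¹ * (E g - E (P.mulVec g))
        + (2:ℝ)⁻¹ * ∑ z, π z * ((g z - P.mulVec g z) * (g z - P.mulVec g z)) := hp
    rw [this]; positivity
  -- scaling
  have hscaleE : ∀ (g : Z → ℝ) (t : ℝ), E (fun z => g z / t) = (t * t)⁻¹ * E g := by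
    intro g t
    rw [hE, Finset.mul_sum]
    exact Finset.sum_congr rfl fun z _ => by simp [div_mul_div_comm]; ring
  have hmvscale : ∀ (g : Z → ℝ) (t : ℝ) (z : Z),
      P.mulVec (fun z' => g z' / t) z = P.mulVec g z / t := by
    intro g t z
    simp only [Matrix.mulVec, dotProduct]
    rw [Finset.sum_div]
    exact Finset.sum_congr rfl fun z' _ => by ring
  have hscaleφ : ∀ (g : Z → ℝ) (t : ℝ), φ (fun z => g z / t) = (t * t)⁻¹ * φ g := by
    intro g t
    have hB : ∑ z, π z * ((fun z => g z / t) z * P.mulVec (fun z' => g z' / t) z)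
        = (t * t)⁻¹ * ∑ z, π z * (g z * P.mulVec g z) := by
      rw [Finset.mul_sum]
      refine Finset.sum_congr rfl fun z _ => ?_
      rw [hmvscale g t z]
      simp [div_mul_div_comm]; ring
    rw [hφ]
    simp only [hscaleE g t, hB]
    ring
  set S : Set (Z → ℝ) := {g | E g = 1 ∧ ∑ z, π z * g z = 0} with hS
  by_cases hSne : S.Nonempty
  · -- compactness
    have hcontE : Continuous E := by
      apply continuous_finset_sum
      intro z _
      exact continuous_const.mul ((continuous_apply z).mul (continuous_apply z))
    have hcontI : Continuous fun g : Z → ℝ => ∑ z, π z * g z := by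
      apply continuous_finset_sum
      intro z _
      exact continuous_const.mul (continuous_apply z)
    have hcontφ : Continuous φ := by
      apply hcontE.sub
      apply continuous_finset_sum
      intro z _
      refine continuous_const.mul ((continuous_apply z).mul ?_)
      apply continuous_finset_sum
      intro z' _
      exact continuous_const.mul (continuous_apply z')
    have hclosed : IsClosed S := by
      have : S = E ⁻¹' {1} ∩ (fun g : Z → ℝ => ∑ z, π z * g z) ⁻¹' {0} := by
        ext g; simp [hS, Set.mem_inter_iff]
      rw [this]
      exact (isClosed_singleton.preimage hcontE).inter
        (isClosed_singleton.preimage hcontI)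
    obtain ⟨z₀, -, hz₀⟩ := Finset.exists_min_image Finset.univ π ⟨Classical.arbitrary Z, Finset.mem_univ _⟩
    have hbdd : Bornology.IsBounded S := by
      apply (Metric.isBounded_closedBall (x := (0 : Z → ℝ))
        (r := Real.sqrt (π z₀)⁻¹)).subset
      intro g hg
      rw [Metric.mem_closedBall, dist_zero_right]
      rw [pi_norm_le_iff_of_nonneg (Real.sqrt_nonneg _)]
      intro z
      have h1 : π z * (g z * g z) ≤ 1 := by
        have : π z * (g z * g z) ≤ E g :=
          Finset.single_le_sum (f := fun z => π z * (g z * g z))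
            (fun z _ => mul_nonneg (hπ0 z) (mul_self_nonneg _)) (Finset.mem_univ z)
        rw [hg.1] at this; exact this
      have h2 : g z * g z ≤ (π z₀)⁻¹ := by
        have hz : π z₀ ≤ π z := hz₀ z (Finset.mem_univ z)
        have h3 : π z₀ * (g z * g z) ≤ 1 := by nlinarith [mul_self_nonneg (g z)]
        rw [inv_eq_one_div, le_div_iff₀ (hπpos z₀)]
        linarith [h3, mul_comm (π z₀) (g z * g z)]
      have : |g z| ≤ Real.sqrt (π z₀)⁻¹ := by
        rw [← Real.sqrt_mul_self_eq_abs]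
        exact Real.sqrt_le_sqrt h2
      exact this
    have hcomp : IsCompact S := Metric.isCompact_of_isClosed_isBounded hclosed hbdd
    obtain ⟨g₀, hg₀S, hmin⟩ := hcomp.exists_isMinOn hSne hcontφ.continuousOn
    refine ⟨φ g₀, ?_, ?_⟩
    · -- positivity
      rcases lt_or_eq_of_le (hφnn g₀) with h | h
      · exact h
      exfalso
      have hp := my_polar π g₀ (P.mulVec g₀)
      have h1 : 0 ≤ E g₀ - E (P.mulVec g₀) := by linarith [hEP g₀]
      have h2 : (0:ℝ) ≤ ∑ z, π z * ((g₀ z - P.mulVec g₀ z) * (g₀ z - P.mulVec g₀ z)) :=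
        Finset.sum_nonneg fun z _ => mul_nonneg (hπ0 z) (mul_self_nonneg _)
      have hφ0 : φ g₀ = 0 := h.symm
      have hd0 : ∑ z, π z * ((g₀ z - P.mulVec g₀ z) * (g₀ z - P.mulVec g₀ z)) = 0 := by
        have : φ g₀ = (2:ℝ)⁻¹ * (E g₀ - E (P.mulVec g₀))
            + (2:ℝ)⁻¹ * ∑ z, π z * ((g₀ z - P.mulVec g₀ z) * (g₀ z - P.mulVec g₀ z)) := hp
        rw [hφ0] at this
        linarith
      have hfix : P.mulVec g₀ = g₀ := by
        funext z
        have h := (Finset.sum_eq_zero_iff_of_nonneg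
          (fun z _ => mul_nonneg (hπ0 z) (mul_self_nonneg (g₀ z - P.mulVec g₀ z)))).mp hd0
          z (Finset.mem_univ z)
        rcases mul_eq_zero.mp h with h1' | h2'
        · exact absurd h1' (ne_of_gt (hπpos z))
        · have := mul_self_eq_zero.mp h2'
          linarith
      have hfixk : ∀ k, (P ^ k).mulVec g₀ = g₀ := by
        intro k
        induction k with
        | zero => simp
        | succ n ih =>
          rw [pow_succ, ← Matrix.mulVec_mulVec, hfix, ih]
      have hfixm : (P ^ m).mulVec g₀ = g₀ := hfixk m
      have := my_doeblin π hπ0 hπ1 P hP1 hinv m δ₀ hδ g₀ hg₀S.2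
      rw [hfixm] at this
      have hE1 : ∑ z, π z * (g₀ z * g₀ z) = 1 := hg₀S.1
      rw [hE1] at this
      nlinarith
    · -- the bound
      intro g hg
      by_cases hEg : E g = 0
      · have hz := hEzero g hEg
        have h1 : ∑ z, π z * (g z * g z) = 0 := hEg
        have h2 : ∑ z, π z * (g z * (P.mulVec g) z) = 0 := by
          apply Finset.sum_eq_zero
          intro z _
          rw [hz z]; ring
        rw [h1, h2]; simp
      · have hEgpos : 0 < E g := lt_of_le_of_ne (hE0 g) (Ne.symm hEg)
        set t := Real.sqrt (E g) with hts
        have ht : 0 < t := Real.sqrt_pos.mpr hEgpos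
        have htt : t * t = E g := Real.mul_self_sqrt (hE0 g)
        set g0 : Z → ℝ := fun z => g z / t with hg0
        have hg0S : g0 ∈ S := by
          constructor
          · rw [hg0, hscaleE g t, htt]
            field_simp
          · rw [hg0]
            have : ∑ z, π z * (g z / t) = (∑ z, π z * g z) / t := by
              rw [Finset.sum_div]
              exact Finset.sum_congr rfl fun z _ => by ring
            rw [this, hg, zero_div]
        have hmin' : φ g₀ ≤ φ g0 := hmin hg0S
        have hφg : φ g = (t * t) * φ g0 := by
          rw [hg0, hscaleφ g t, htt]
          field_simp
        have goal : φ g₀ * E g ≤ φ g := by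
          rw [hφg, htt.symm]
          calc φ g₀ * (t * t) ≤ φ g0 * (t * t) :=
            mul_le_mul_of_nonneg_right hmin' (by positivity)
          _ = t * t * φ g0 := by ring
        calc φ g₀ * ∑ z, π z * (g z * g z) = φ g₀ * E g := rfl
          _ ≤ φ g := goal
          _ = _ := rfl
  · -- S empty: any mean-zero g is 0
    refine ⟨1, one_pos, ?_⟩
    intro g hg
    have hEg : E g = 0 := by
      by_contra hne
      have hEgpos : 0 < E g := lt_of_le_of_ne (hE0 g) (Ne.symm hne)
      set t := Real.sqrt (E g) with hts
      have ht : 0 < t := Real.sqrt_pos.mpr hEgpos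
      have htt : t * t = E g := Real.mul_self_sqrt (hE0 g)
      apply hSne
      refine ⟨fun z => g z / t, ?_, ?_⟩
      · rw [hscaleE g t, htt]; field_simp
      · have : ∑ z, π z * (g z / t) = (∑ z, π z * g z) / t := by
          rw [Finset.sum_div]
          exact Finset.sum_congr rfl fun z _ => by ring
        rw [this, hg, zero_div]
    have hz := hEzero g hEg
    have h1 : ∑ z, π z * (g z * g z) = 0 := hEg
    have h2 : ∑ z, π z * (g z * P.mulVec g z) = 0 := by
      apply Finset.sum_eq_zero
      intro z _
      rw [hz z]
      ring
    rw [h1, h2]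
    simp


/-- Reduction of the reversibilization quadratic form to that of `K`. -/
lemma my_rev (π : Z → ℝ) (hπpos : ∀ z, 0 < π z) (K : Matrix Z Z ℝ) (g : Z → ℝ) :
    ∑ z, π z * (g z * (reversib π K).mulVec g z) = ∑ z, π z * (g z * K.mulVec g z) := by
  have hmv : ∀ z, (reversib π K).mulVec g z
      = 2⁻¹ * (K.mulVec g z + (piAdjoint π K).mulVec g z) := by
    intro z
    rw [reversib, Matrix.smul_mulVec, Matrix.add_mulVec]
    simp [Pi.smul_apply, smul_eq_mul]
  have hadj : ∑ z, π z * (g z * (piAdjoint π K).mulVec g z)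
      = ∑ z, π z * (g z * K.mulVec g z) := by
    calc ∑ z, π z * (g z * (piAdjoint π K).mulVec g z)
        = ∑ z, ∑ z', π z' * (g z' * (K z' z * g z)) := by
          refine Finset.sum_congr rfl fun z _ => ?_
          simp only [Matrix.mulVec, dotProduct, piAdjoint, Matrix.of_apply]
          rw [Finset.mul_sum, Finset.mul_sum]
          refine Finset.sum_congr rfl fun z' _ => ?_
          field_simp [(hπpos z).ne']
      _ = ∑ z', ∑ z, π z' * (g z' * (K z' z * g z)) := Finset.sum_comm
      _ = ∑ z', π z' * (g z' * K.mulVec g z') := by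
          refine Finset.sum_congr rfl fun z' _ => ?_
          simp only [Matrix.mulVec, dotProduct]
          rw [Finset.mul_sum, Finset.mul_sum]
  calc ∑ z, π z * (g z * (reversib π K).mulVec g z)
      = ∑ z, (2⁻¹ * (π z * (g z * K.mulVec g z))
          + 2⁻¹ * (π z * (g z * (piAdjoint π K).mulVec g z))) := by
        refine Finset.sum_congr rfl fun z _ => ?_
        rw [hmv z]; ring
    _ = 2⁻¹ * ∑ z, π z * (g z * K.mulVec g z)
          + 2⁻¹ * ∑ z, π z * (g z * (piAdjoint π K).mulVec g z) := by
        rw [Finset.sum_add_distrib, Finset.mul_sum, Finset.mul_sum]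
    _ = ∑ z, π z * (g z * K.mulVec g z) := by rw [hadj]; ring

/-- Evaluation of the `K_β` quadratic form as a geometric series. -/
lemma my_kmat (π : Z → ℝ) (P : Matrix Z Z ℝ)
    (hP0 : ∀ z z', 0 ≤ P z z') (hP1 : ∀ z, ∑ z', P z z' = 1)
    (β : ℝ) (hβ0 : 0 ≤ β) (hβ1 : β < 1) (g : Z → ℝ) :
    ∑ z, π z * (g z * (Kmat P β).mulVec g z)
      = (1 - β) * ∑' k : ℕ, β ^ k * ∑ z, π z * (g z * (P ^ (k + 1)).mulVec g z) := by
  have hent : ∀ k z z', (P ^ k) z z' ≤ 1 := by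
    intro k z z'
    calc (P ^ k) z z' ≤ ∑ y, (P ^ k) z y :=
        Finset.single_le_sum (fun y _ => my_pow_nonneg P hP0 k z y) (Finset.mem_univ z')
      _ = 1 := my_pow_rowsum P hP1 k z
  have hgeo : Summable (fun k : ℕ => β ^ k) := summable_geometric_of_lt_one hβ0 hβ1
  have hsumE : ∀ z z', Summable (fun k : ℕ => β ^ k * (P ^ (k + 1)) z z') := by
    intro z z'
    refine Summable.of_nonneg_of_le (fun k => ?_) (fun k => ?_) hgeo
    · exact mul_nonneg (pow_nonneg hβ0 k) (my_pow_nonneg P hP0 (k+1) z z')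
    · calc β ^ k * (P ^ (k + 1)) z z' ≤ β ^ k * 1 :=
          mul_le_mul_of_nonneg_left (hent (k+1) z z') (pow_nonneg hβ0 k)
        _ = β ^ k := mul_one _
  have hsumM : Summable (fun k : ℕ => β ^ k • P ^ (k + 1)) := by
    refine Pi.summable.mpr ?_
    intro z
    rw [Pi.summable]
    intro z'
    exact hsumE z z'
  have happly : ∀ z z', Kmat P β z z' = (1 - β) * ∑' k : ℕ, β ^ k * (P ^ (k + 1)) z z' := by
    intro z z'
    rw [Kmat]
    have h1 : ((∑' k : ℕ, β ^ k • P ^ (k + 1)) : Matrix Z Z ℝ) z z'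
        = ∑' k : ℕ, (β ^ k • P ^ (k + 1)) z z' := by
      exact (congrArg (fun r => r z') (tsum_apply hsumM)).trans (tsum_apply (Pi.summable.mp hsumM z))
    simp only [Matrix.smul_apply, smul_eq_mul, h1]
  -- mulVec of Kmat
  have hmv : ∀ z, (Kmat P β).mulVec g z
      = (1 - β) * ∑' k : ℕ, β ^ k * (P ^ (k + 1)).mulVec g z := by
    intro z
    simp only [Matrix.mulVec, dotProduct, happly]
    calc ∑ z', (1 - β) * (∑' k : ℕ, β ^ k * (P ^ (k + 1)) z z') * g z'
        = (1 - β) * ∑ z', ∑' k : ℕ, (β ^ k * (P ^ (k + 1)) z z') * g z' := by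
          rw [Finset.mul_sum]
          refine Finset.sum_congr rfl fun z' _ => ?_
          rw [mul_assoc, ← tsum_mul_right]
      _ = (1 - β) * ∑' k : ℕ, ∑ z', (β ^ k * (P ^ (k + 1)) z z') * g z' := by
          rw [Summable.tsum_finsetSum (fun z' _ => (hsumE z z').mul_right (g z'))]
      _ = (1 - β) * ∑' k : ℕ, β ^ k * (P ^ (k + 1)).mulVec g z := by
          congr 1
          refine tsum_congr fun k => ?_
          simp only [Matrix.mulVec, dotProduct, Finset.mul_sum]
          exact Finset.sum_congr rfl fun z' _ => by ring
  -- bound for summability of the z-indexed family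
  have habs : ∀ k z, |(P ^ (k + 1)).mulVec g z| ≤ ∑ z', |g z'| := by
    intro k z
    calc |∑ z', (P ^ (k+1)) z z' * g z'| ≤ ∑ z', |(P ^ (k+1)) z z' * g z'| :=
        Finset.abs_sum_le_sum_abs _ _
      _ ≤ ∑ z', |g z'| := by
        refine Finset.sum_le_sum fun z' _ => ?_
        rw [abs_mul, abs_of_nonneg (my_pow_nonneg P hP0 (k+1) z z')]
        exact mul_le_of_le_one_left (abs_nonneg _) (hent (k+1) z z')
  have hsumz : ∀ z, Summable (fun k : ℕ => (π z * g z) * (β ^ k * (P ^ (k + 1)).mulVec g z)) := by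
    intro z
    apply Summable.of_abs
    refine Summable.of_nonneg_of_le (fun k => abs_nonneg _) (fun k => ?_)
      (hgeo.mul_right (|π z * g z| * ∑ z', |g z'|))
    have h1 : |β ^ k * (P ^ (k + 1)).mulVec g z| ≤ β ^ k * ∑ z', |g z'| := by
      rw [abs_mul, abs_of_nonneg (pow_nonneg hβ0 k)]
      exact mul_le_mul_of_nonneg_left (habs k z) (pow_nonneg hβ0 k)
    calc |π z * g z * (β ^ k * (P ^ (k + 1)).mulVec g z)|
        = |π z * g z| * |β ^ k * (P ^ (k + 1)).mulVec g z| := abs_mul _ _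
      _ ≤ |π z * g z| * (β ^ k * ∑ z', |g z'|) :=
          mul_le_mul_of_nonneg_left h1 (abs_nonneg _)
      _ = β ^ k * (|π z * g z| * ∑ z', |g z'|) := by ring
  calc ∑ z, π z * (g z * (Kmat P β).mulVec g z)
      = (1 - β) * ∑ z, ∑' k : ℕ, (π z * g z) * (β ^ k * (P ^ (k + 1)).mulVec g z) := by
        rw [Finset.mul_sum]
        refine Finset.sum_congr rfl fun z _ => ?_
        rw [hmv z]
        calc π z * (g z * ((1 - β) * ∑' k : ℕ, β ^ k * (P ^ (k + 1)).mulVec g z))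
            = (π z * g z * (1 - β)) * ∑' k : ℕ, β ^ k * (P ^ (k + 1)).mulVec g z := by ring
          _ = ∑' k : ℕ, (π z * g z * (1 - β)) * (β ^ k * (P ^ (k + 1)).mulVec g z) :=
              tsum_mul_left.symm
          _ = ∑' k : ℕ, (1 - β) * ((π z * g z) * (β ^ k * (P ^ (k + 1)).mulVec g z)) :=
              tsum_congr fun k => by ring
          _ = (1 - β) * ∑' k : ℕ, (π z * g z) * (β ^ k * (P ^ (k + 1)).mulVec g z) :=
              tsum_mul_left
    _ = (1 - β) * ∑' k : ℕ, ∑ z, (π z * g z) * (β ^ k * (P ^ (k + 1)).mulVec g z) := by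
        rw [Summable.tsum_finsetSum (fun z _ => hsumz z)]
    _ = (1 - β) * ∑' k : ℕ, β ^ k * ∑ z, π z * (g z * (P ^ (k + 1)).mulVec g z) := by
        congr 1
        refine tsum_congr fun k => ?_
        rw [Finset.mul_sum]
        exact Finset.sum_congr rfl fun z _ => by ring

end MyAux

/-- if `P` is primitive and `π > 0`, then there is a uniform
Poincaré constant `ε > 0` for the reversibilizations `S_β`, `β ∈ [0,1)`. -/
theorem stmt_11 {Z : Type*} [Fintype Z] [Nonempty Z] [DecidableEq Z]
    (P : Matrix Z Z ℝ)
    (hP0 : ∀ z z', 0 ≤ P z z') (hP1 : ∀ z, ∑ z', P z z' = 1)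
    (hprim : ∃ m : ℕ, 1 ≤ m ∧ ∀ z z', 0 < (P ^ m) z z')
    (π : Z → ℝ) (hπpos : ∀ z, 0 < π z) (hπ1 : ∑ z, π z = 1)
    (hinv : ∀ z', ∑ z, π z * P z z' = π z') :
    ∃ ε > (0 : ℝ), ∀ β ∈ Set.Ico (0 : ℝ) 1, ∀ g : Z → ℝ,
      (∑ z, π z * (g z * 1)) = 0 →
      ε * ∑ z, π z * (g z * g z) ≤
        ∑ z, π z * (g z * (g z - (reversib π (Kmat P β)).mulVec g z)) := by
  classical
  obtain ⟨m, hm1, hPm⟩ := hprim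
  have hπ0 : ∀ z, 0 ≤ π z := fun z => (hπpos z).le
  have hπle1 : ∀ z, π z ≤ 1 := by
    intro z
    rw [← hπ1]
    exact Finset.single_le_sum (fun z _ => hπ0 z) (Finset.mem_univ z)
  obtain ⟨p, -, hp⟩ := Finset.exists_min_image (Finset.univ : Finset (Z × Z))
    (fun q => (P ^ m) q.1 q.2) ⟨(Classical.arbitrary Z, Classical.arbitrary Z), Finset.mem_univ _⟩
  set δ₀ : ℝ := min ((P ^ m) p.1 p.2) (1/2) with hδ₀def
  have hδpos : 0 < δ₀ := lt_min (hPm p.1 p.2) (by norm_num)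
  have hδ1 : δ₀ ≤ 1 := le_trans (min_le_right _ _) (by norm_num)
  have hδ : ∀ z z', δ₀ * π z' ≤ (P ^ m) z z' := by
    intro z z'
    calc δ₀ * π z' ≤ δ₀ * 1 := mul_le_mul_of_nonneg_left (hπle1 z') hδpos.le
      _ = δ₀ := mul_one _
      _ ≤ (P ^ m) p.1 p.2 := min_le_left _ _
      _ ≤ (P ^ m) z z' := hp (z, z') (Finset.mem_univ _)
  obtain ⟨lam, hlam, hgap⟩ := my_gap π hπpos hπ1 P hP0 hP1 hinv m δ₀ hδpos hδ1 hδ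
  refine ⟨min (lam / 2) (δ₀ / 2 * (1/2) ^ (m - 1)),
    lt_min (by positivity) (by positivity), ?_⟩
  rintro β ⟨hβ0, hβ1⟩ g hg
  have hg' : ∑ z, π z * g z = 0 := by simpa using hg
  have hgeo : Summable (fun k : ℕ => β ^ k) := summable_geometric_of_lt_one hβ0 hβ1
  set E := ∑ z, π z * (g z * g z) with hE
  have hE0 : 0 ≤ E := Finset.sum_nonneg fun z _ => mul_nonneg (hπ0 z) (mul_self_nonneg _)
  set b : ℕ → ℝ := fun n => ∑ z, π z * (g z * (P ^ n).mulVec g z) with hb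
  have hbn : ∀ n : ℕ, ∑ z, π z * (g z * (P ^ n).mulVec g z) = b n := fun n => rfl
  have hPk0 := my_pow_nonneg P hP0
  have hPk1 := my_pow_rowsum P hP1
  have hPkinv := my_pow_inv P π hinv
  -- contraction of every P^n
  have hEPn : ∀ h : Z → ℝ, ∀ n,
      ∑ z, π z * ((P ^ n).mulVec h z * (P ^ n).mulVec h z) ≤ ∑ z, π z * (h z * h z) := by
    intro h n
    have := my_contr π hπ0 (P ^ n) 1 (hPk0 n) (hPk1 n)
      (fun z' => by rw [one_mul]; exact hPkinv n z') h
    simpa using this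
  -- polar identity specialised
  have hpol : ∀ n : ℕ, E - b n = (2:ℝ)⁻¹ * (E - ∑ z, π z * ((P ^ n).mulVec g z * (P ^ n).mulVec g z))
      + (2:ℝ)⁻¹ * ∑ z, π z * ((g z - (P ^ n).mulVec g z) * (g z - (P ^ n).mulVec g z)) := by
    intro n
    have := my_polar π g ((P ^ n).mulVec g)
    rw [← hE, hbn n] at this
    exact this
  have hdnn : ∀ n : ℕ, (0:ℝ) ≤ ∑ z, π z *
      ((g z - (P ^ n).mulVec g z) * (g z - (P ^ n).mulVec g z)) :=
    fun n => Finset.sum_nonneg fun z _ => mul_nonneg (hπ0 z) (mul_self_nonneg _)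
  have hDnn : ∀ n, 0 ≤ E - b n := by
    intro n
    have h1 := hpol n
    have h2 := hdnn n
    have h3 := hEPn g n
    rw [← hE] at h3
    linarith
  have hDub : ∀ n, E - b n ≤ 2 * E := by
    intro n
    have h1 : (0:ℝ) ≤ ∑ z, π z *
        ((g z + (P ^ n).mulVec g z) * (g z + (P ^ n).mulVec g z)) :=
      Finset.sum_nonneg fun z _ => mul_nonneg (hπ0 z) (mul_self_nonneg _)
    have h2 := my_sqexp π g ((P ^ n).mulVec g)
    rw [← hE, hbn n] at h2
    have h3 := hEPn g n
    rw [← hE] at h3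
    linarith
  have hDm : ∀ n, m ≤ n → δ₀ / 2 * E ≤ E - b n := by
    intro n hmn
    have hsplit : (P ^ n).mulVec g = (P ^ (n - m)).mulVec ((P ^ m).mulVec g) := by
      rw [Matrix.mulVec_mulVec, ← pow_add, Nat.sub_add_cancel hmn]
    have hc1 : ∑ z, π z * ((P ^ n).mulVec g z * (P ^ n).mulVec g z)
        ≤ ∑ z, π z * ((P ^ m).mulVec g z * (P ^ m).mulVec g z) := by
      rw [hsplit]
      exact hEPn ((P ^ m).mulVec g) (n - m)
    have hc2 := my_doeblin π hπ0 hπ1 P hP1 hinv m δ₀ hδ g hg'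
    rw [← hE] at hc2
    have h1 := hpol n
    have h2 := hdnn n
    nlinarith [mul_nonneg (mul_nonneg hδpos.le (sub_nonneg.mpr hδ1)) hE0, h1, h2, hc1, hc2]
  have hD1 : lam * E ≤ E - b 1 := by
    have := hgap g hg'
    rw [← hE] at this
    have hb1 : b 1 = ∑ z, π z * (g z * P.mulVec g z) := by
      rw [hb]
      simp [pow_one]
    rw [hb1]
    exact this
  -- the series
  set f : ℕ → ℝ := fun k => β ^ k * (E - b (k + 1)) with hf
  have hf0 : ∀ k, 0 ≤ f k := fun k => mul_nonneg (pow_nonneg hβ0 k) (hDnn (k + 1))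
  have hfs : Summable f := by
    refine Summable.of_nonneg_of_le hf0 (fun k => ?_) (hgeo.mul_right (2 * E))
    exact mul_le_mul_of_nonneg_left (hDub (k + 1)) (pow_nonneg hβ0 k)
  have hsA : Summable (fun k : ℕ => β ^ k * E) := hgeo.mul_right E
  have hsB : Summable (fun k : ℕ => β ^ k * b (k + 1)) := by
    have heq : (fun k : ℕ => β ^ k * b (k + 1)) = fun k => β ^ k * E - f k := by
      funext k
      rw [hf]
      ring
    rw [heq]
    exact hsA.sub hfs
  have hβne : (1 : ℝ) - β ≠ 0 := by linarith
  have hEgeo : E = (1 - β) * ∑' k : ℕ, β ^ k * E := by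
    rw [tsum_mul_right, tsum_geometric_of_lt_one hβ0 hβ1, ← mul_assoc,
      mul_inv_cancel₀ hβne, one_mul]
  have hRHS : ∑ z, π z * (g z * (g z - (reversib π (Kmat P β)).mulVec g z))
      = (1 - β) * ∑' k : ℕ, f k := by
    have hstep1 : ∑ z, π z * (g z * (g z - (reversib π (Kmat P β)).mulVec g z))
        = E - ∑ z, π z * (g z * (reversib π (Kmat P β)).mulVec g z) := by
      rw [hE, ← Finset.sum_sub_distrib]
      exact Finset.sum_congr rfl fun z _ => by ring
    rw [hstep1, my_rev π hπpos (Kmat P β) g, my_kmat π P hP0 hP1 β hβ0 hβ1 g]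
    have hbk : ∀ k : ℕ, ∑ z, π z * (g z * (P ^ (k + 1)).mulVec g z) = b (k + 1) :=
      fun k => rfl
    calc E - (1 - β) * ∑' k : ℕ, β ^ k * ∑ z, π z * (g z * (P ^ (k + 1)).mulVec g z)
        = (1 - β) * ∑' k : ℕ, β ^ k * E
          - (1 - β) * ∑' k : ℕ, β ^ k * b (k + 1) := by
          rw [← hEgeo]
      _ = (1 - β) * (∑' k : ℕ, β ^ k * E - ∑' k : ℕ, β ^ k * b (k + 1)) := by ring
      _ = (1 - β) * ∑' k : ℕ, (β ^ k * E - β ^ k * b (k + 1)) := by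
          rw [← Summable.tsum_sub hsA hsB]
      _ = (1 - β) * ∑' k : ℕ, f k := by
          congr 1
          exact tsum_congr fun k => by rw [hf]; ring
  rw [hRHS]
  rcases le_or_gt β (1/2) with hc | hc
  · -- small β: use the k = 0 term
    have h1 : f 0 ≤ ∑' k, f k := Summable.le_tsum hfs 0 (fun j _ => hf0 j)
    have h2 : lam * E ≤ f 0 := by
      rw [hf]
      simpa using hD1
    have hmin1 : min (lam / 2) (δ₀ / 2 * (1/2) ^ (m - 1)) ≤ lam / 2 := min_le_left _ _
    calc min (lam / 2) (δ₀ / 2 * (1/2) ^ (m - 1)) * E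
        ≤ lam / 2 * E := mul_le_mul_of_nonneg_right hmin1 hE0
      _ ≤ (1 - β) * (lam * E) := by
          have hnn : 0 ≤ (1 - β - 1/2) * (lam * E) :=
            mul_nonneg (by linarith) (mul_nonneg hlam.le hE0)
          nlinarith
      _ ≤ (1 - β) * ∑' k, f k := by
          refine mul_le_mul_of_nonneg_left (le_trans h2 h1) (by linarith)
  · -- large β: use the tail from index m-1
    have hshift : Summable fun k => f (k + (m - 1)) := (summable_nat_add_iff (m - 1)).mpr hfs
    have hlow_eq : (fun k : ℕ => β ^ (k + (m - 1)) * (δ₀ / 2 * E))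
        = fun k => β ^ k * (β ^ (m - 1) * (δ₀ / 2 * E)) := by
      funext k
      rw [pow_add]
      ring
    have hlow_s : Summable fun k : ℕ => β ^ (k + (m - 1)) * (δ₀ / 2 * E) := by
      rw [hlow_eq]
      exact hgeo.mul_right _
    have hle : ∀ k : ℕ, β ^ (k + (m - 1)) * (δ₀ / 2 * E) ≤ f (k + (m - 1)) := by
      intro k
      have hmle : m ≤ (k + (m - 1)) + 1 := by omega
      exact mul_le_mul_of_nonneg_left (hDm _ hmle) (pow_nonneg hβ0 _)
    have h2 : ∑' k : ℕ, β ^ (k + (m - 1)) * (δ₀ / 2 * E) ≤ ∑' k, f (k + (m - 1)) :=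
      Summable.tsum_le_tsum hle hlow_s hshift
    have h3 : ∑' k, f (k + (m - 1)) ≤ ∑' k, f k := by
      rw [← Summable.sum_add_tsum_nat_add (k := m - 1) hfs]
      have : 0 ≤ ∑ i ∈ Finset.range (m - 1), f i := Finset.sum_nonneg fun i _ => hf0 i
      linarith
    have hval : ∑' k : ℕ, β ^ (k + (m - 1)) * (δ₀ / 2 * E)
        = (1 - β)⁻¹ * (β ^ (m - 1) * (δ₀ / 2 * E)) := by
      rw [hlow_eq, tsum_mul_right, tsum_geometric_of_lt_one hβ0 hβ1]
    have hpowle : (1/2 : ℝ) ^ (m - 1) ≤ β ^ (m - 1) := pow_le_pow_left₀ (by norm_num) hc.le _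
    have hmin2 : min (lam / 2) (δ₀ / 2 * (1/2) ^ (m - 1)) ≤ δ₀ / 2 * (1/2) ^ (m - 1) :=
      min_le_right _ _
    calc min (lam / 2) (δ₀ / 2 * (1/2) ^ (m - 1)) * E
        ≤ (δ₀ / 2 * (1/2) ^ (m - 1)) * E := mul_le_mul_of_nonneg_right hmin2 hE0
      _ ≤ (δ₀ / 2 * β ^ (m - 1)) * E := by
          have : δ₀ / 2 * (1/2) ^ (m - 1) ≤ δ₀ / 2 * β ^ (m - 1) :=
            mul_le_mul_of_nonneg_left hpowle (by positivity)
          exact mul_le_mul_of_nonneg_right this hE0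
      _ = (1 - β) * ((1 - β)⁻¹ * (β ^ (m - 1) * (δ₀ / 2 * E))) := by
          field_simp
      _ ≤ (1 - β) * ∑' k, f k := by
          refine mul_le_mul_of_nonneg_left ?_ (by linarith)
          rw [← hval]
          exact le_trans h2 h3
end

section
/- Suppose P is primitive, i.e. there exists m ≥ 1 such that (P^m)(z,z') > 0 for all z, z', and π(z) > 0 for all z. Then there exists ε > 0 such that for all γ, λ ∈ [0,1] with γλ < 1 and all θ ∈ ℝ^d, θᵀĀ(λ,γ)θ ≤ −ε·θᵀΣ(0)θ. -/
open Matrix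
open scoped RealInnerProductSpace

section Aux

variable {Z : Type*} [Fintype Z]

/-- Weighted embedding into Euclidean space. -/
noncomputable def emb (π : Z → ℝ) (v : Z → ℝ) : EuclideanSpace ℝ Z :=
  WithLp.toLp 2 (fun z => Real.sqrt (π z) * v z)

lemma inner_emb (π : Z → ℝ) (hπ0 : ∀ z, 0 ≤ π z) (u v : Z → ℝ) :
    ⟪emb π u, emb π v⟫ = ∑ z, π z * (u z * v z) := by
  simp only [PiLp.inner_apply, RCLike.inner_apply, conj_trivial, emb]
  exact Finset.sum_congr rfl fun z _ => by
    rw [show Real.sqrt (π z) * v z * (Real.sqrt (π z) * u z)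
        = (Real.sqrt (π z) * Real.sqrt (π z)) * (u z * v z) by ring,
      Real.mul_self_sqrt (hπ0 z)]

lemma norm_emb_sq (π : Z → ℝ) (hπ0 : ∀ z, 0 ≤ π z) (v : Z → ℝ) :
    ‖emb π v‖ ^ 2 = ∑ z, π z * v z ^ 2 := by
  rw [← real_inner_self_eq_norm_sq, inner_emb π hπ0]
  exact Finset.sum_congr rfl fun z _ => by ring

lemma emb_sub (π : Z → ℝ) (u v : Z → ℝ) : emb π (u - v) = emb π u - emb π v := by
  ext z; simp [emb]; ring

lemma emb_add (π : Z → ℝ) (u v : Z → ℝ) : emb π (u + v) = emb π u + emb π v := by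
  ext z; simp [emb]; ring

lemma gen_contract_sq (π : Z → ℝ) (S : Matrix Z Z ℝ) (c : ℝ)
    (hπ0 : ∀ z, 0 ≤ π z)
    (hS0 : ∀ z z', 0 ≤ S z z') (hS1 : ∀ z, ∑ z', S z z' = c)
    (hSinv : ∀ z', ∑ z, π z * S z z' = c * π z') (v : Z → ℝ) :
    ∑ z, π z * (S.mulVec v z) ^ 2 ≤ c ^ 2 * ∑ z, π z * v z ^ 2 := by
  have row : ∀ z, (S.mulVec v z) ^ 2 ≤ c * ∑ z', S z z' * v z' ^ 2 := by
    intro z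
    have h := Finset.sum_sq_le_sum_mul_sum_of_sq_eq_mul (Finset.univ : Finset Z)
      (r := fun z' => S z z' * v z') (f := fun z' => S z z')
      (g := fun z' => S z z' * v z' ^ 2)
      (fun i _ => hS0 z i) (fun i _ => mul_nonneg (hS0 z i) (sq_nonneg _))
      (fun i _ => by ring)
    rw [hS1 z] at h
    simpa [Matrix.mulVec, dotProduct] using h
  calc ∑ z, π z * (S.mulVec v z) ^ 2
      ≤ ∑ z, π z * (c * ∑ z', S z z' * v z' ^ 2) :=
        Finset.sum_le_sum fun z _ => mul_le_mul_of_nonneg_left (row z) (hπ0 z)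
    _ = ∑ z', ∑ z, c * ((π z * S z z') * v z' ^ 2) := by
        rw [Finset.sum_comm]
        exact Finset.sum_congr rfl fun z _ => by
          rw [Finset.mul_sum, Finset.mul_sum]
          exact Finset.sum_congr rfl fun z' _ => by ring
    _ = ∑ z', c * ((∑ z, π z * S z z') * v z' ^ 2) := by
        simp_rw [← Finset.mul_sum, ← Finset.sum_mul]
    _ = c ^ 2 * ∑ z, π z * v z ^ 2 := by
        simp_rw [hSinv, Finset.mul_sum]
        exact Finset.sum_congr rfl fun z _ => by ring

lemma gen_contract_norm (π : Z → ℝ) (S : Matrix Z Z ℝ) (c : ℝ)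
    (hπ0 : ∀ z, 0 ≤ π z) (hc : 0 ≤ c)
    (hS0 : ∀ z z', 0 ≤ S z z') (hS1 : ∀ z, ∑ z', S z z' = c)
    (hSinv : ∀ z', ∑ z, π z * S z z' = c * π z') (v : Z → ℝ) :
    ‖emb π (S.mulVec v)‖ ≤ c * ‖emb π v‖ := by
  have h := gen_contract_sq π S c hπ0 hS0 hS1 hSinv v
  rw [← norm_emb_sq π hπ0, ← norm_emb_sq π hπ0] at h
  nlinarith [norm_nonneg (emb π (S.mulVec v)), norm_nonneg (emb π v),
    mul_nonneg hc (norm_nonneg (emb π v))]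

end Aux



noncomputable def qformL {d : ℕ} (θ : Fin d → ℝ) : Matrix (Fin d) (Fin d) ℝ →ₗ[ℝ] ℝ where
  toFun M := θ ⬝ᵥ M *ᵥ θ
  map_add' M N := by simp [Matrix.add_mulVec, dotProduct_add]
  map_smul' c M := by simp [Matrix.smul_mulVec, dotProduct_smul]

/-- if `P` is primitive and `π > 0`, there exists `ε > 0` with
`θᵀĀ(λ,γ)θ ≤ −ε·θᵀΣ(0)θ` uniformly over `γ, λ ∈ [0,1]` with `γλ < 1`. -/
theorem stmt_12 {Z : Type*} [Fintype Z] [Nonempty Z] [DecidableEq Z]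
    (P : Matrix Z Z ℝ)
    (hP0 : ∀ z z', 0 ≤ P z z') (hP1 : ∀ z, ∑ z', P z z' = 1)
    (hprim : ∃ m : ℕ, 1 ≤ m ∧ ∀ z z', 0 < (P ^ m) z z')
    (π : Z → ℝ) (hπpos : ∀ z, 0 < π z) (hπ1 : ∑ z, π z = 1)
    (hinv : ∀ z', ∑ z, π z * P z z' = π z')
    {d : ℕ} (hd : 1 ≤ d) (ψ : Z → Fin d → ℝ) :
    ∃ ε > (0 : ℝ), ∀ gam ∈ Set.Icc (0 : ℝ) 1, ∀ lam ∈ Set.Icc (0 : ℝ) 1,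
      gam * lam < 1 →
      ∀ θ : Fin d → ℝ,
        θ ⬝ᵥ (Abar P π ψ lam gam).mulVec θ ≤
          -ε * (θ ⬝ᵥ (Sigma0 P π ψ).mulVec θ) := by
  classical
  obtain ⟨m, hm1, hPm⟩ := hprim
  have hπ0 : ∀ z, 0 ≤ π z := fun z => (hπpos z).le
  -- Facts about matrix powers
  have hPk0 : ∀ (k : ℕ) z z', 0 ≤ (P ^ k) z z' := by
    intro k
    induction k with
    | zero => intro z z'; by_cases h : z = z' <;> simp [pow_zero, Matrix.one_apply, h]
    | succ k ih =>
      intro z z'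
      rw [pow_succ, Matrix.mul_apply]
      exact Finset.sum_nonneg fun j _ => mul_nonneg (ih z j) (hP0 j z')
  have hPk1 : ∀ (k : ℕ) z, ∑ z', (P ^ k) z z' = 1 := by
    intro k
    induction k with
    | zero => intro z; simp [pow_zero, Matrix.one_apply]
    | succ k ih =>
      intro z
      simp only [pow_succ, Matrix.mul_apply]
      rw [Finset.sum_comm]
      calc ∑ j, ∑ z', (P ^ k) z j * P j z'
          = ∑ j, (P ^ k) z j * ∑ z', P j z' :=
            Finset.sum_congr rfl fun j _ => (Finset.mul_sum _ _ _).symm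
        _ = 1 := by simp only [hP1, mul_one]; exact ih z
  have hPkinv : ∀ (k : ℕ) z', ∑ z, π z * (P ^ k) z z' = π z' := by
    intro k
    induction k with
    | zero =>
      intro z'
      simp [pow_zero, Matrix.one_apply, mul_ite, Finset.sum_ite_eq]
    | succ k ih =>
      intro z'
      simp only [pow_succ, Matrix.mul_apply, Finset.mul_sum]
      rw [Finset.sum_comm]
      calc ∑ j, ∑ z, π z * ((P ^ k) z j * P j z')
          = ∑ j, (∑ z, π z * (P ^ k) z j) * P j z' :=
            Finset.sum_congr rfl fun j _ => by
              rw [Finset.sum_mul]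
              exact Finset.sum_congr rfl fun z _ => by ring
        _ = π z' := by simp_rw [ih]; exact hinv z'
  -- the Doeblin coefficient
  have hne : (Finset.univ : Finset (Z × Z)).Nonempty := Finset.univ_nonempty
  set δ : ℝ := Finset.univ.inf' hne (fun p : Z × Z => (P ^ m) p.1 p.2 / π p.2) with hδdef
  have hδpos : 0 < δ := by
    rw [hδdef, Finset.lt_inf'_iff]
    exact fun p _ => div_pos (hPm p.1 p.2) (hπpos p.2)
  have hδle : ∀ z z', δ * π z' ≤ (P ^ m) z z' := by
    intro z z'
    have h := Finset.inf'_le (f := fun p : Z × Z => (P ^ m) p.1 p.2 / π p.2)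
      (b := (z, z')) (Finset.mem_univ _)
    rw [← hδdef] at h
    rw [le_div_iff₀ (hπpos z')] at h
    exact h
  have hδ1 : δ ≤ 1 := by
    obtain ⟨z0⟩ := ‹Nonempty Z›
    have h1 : ∑ z', δ * π z' ≤ ∑ z', (P ^ m) z0 z' :=
      Finset.sum_le_sum fun z' _ => hδle z0 z'
    rwa [hPk1 m z0, ← Finset.mul_sum, hπ1, mul_one] at h1
  -- contraction facts
  have hstep : ∀ (k : ℕ) (v : Z → ℝ), ‖emb π ((P ^ k) *ᵥ v)‖ ≤ ‖emb π v‖ := by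
    intro k v
    have h := gen_contract_norm π (P ^ k) 1 hπ0 zero_le_one (hPk0 k) (hPk1 k)
      (fun z' => by rw [hPkinv k z', one_mul]) v
    simpa using h
  have hmcontr : ∀ v : Z → ℝ, (∑ z, π z * v z = 0) →
      ‖emb π ((P ^ m) *ᵥ v)‖ ≤ (1 - δ) * ‖emb π v‖ := by
    intro v hv
    set S : Matrix Z Z ℝ := Matrix.of fun z z' => (P ^ m) z z' - δ * π z' with hS
    have hSv : S *ᵥ v = (P ^ m) *ᵥ v := by
      funext z
      simp only [Matrix.mulVec, dotProduct, hS, Matrix.of_apply]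
      have : ∑ z', ((P ^ m) z z' - δ * π z') * v z'
          = (∑ z', (P ^ m) z z' * v z') - δ * ∑ z', π z' * v z' := by
        rw [Finset.mul_sum, ← Finset.sum_sub_distrib]
        exact Finset.sum_congr rfl fun z' _ => by ring
      rw [this, hv, mul_zero, sub_zero]
    rw [← hSv]
    exact gen_contract_norm π S (1 - δ) hπ0 (sub_nonneg.2 hδ1)
      (fun z z' => sub_nonneg.2 (hδle z z'))
      (fun z => by
        simp only [hS, Matrix.of_apply]
        rw [Finset.sum_sub_distrib, hPk1 m z, ← Finset.mul_sum, hπ1, mul_one])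
      (fun z' => by
        simp only [hS, Matrix.of_apply]
        have : ∑ z, π z * ((P ^ m) z z' - δ * π z')
            = (∑ z, π z * (P ^ m) z z') - δ * π z' * ∑ z, π z := by
          rw [Finset.mul_sum, ← Finset.sum_sub_distrib]
          exact Finset.sum_congr rfl fun z _ => by ring
        rw [this, hPkinv m z', hπ1, mul_one]
        ring) v
  have hmk : ∀ k : ℕ, 1 ≤ k → ∀ v : Z → ℝ, (∑ z, π z * v z = 0) →
      ‖emb π ((P ^ (k * m)) *ᵥ v)‖ ≤ (1 - δ) * ‖emb π v‖ := by
    intro k hk v hv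
    obtain ⟨j, rfl⟩ := Nat.exists_eq_add_of_le hk
    have he : (P ^ ((1 + j) * m)) *ᵥ v = (P ^ (j * m)) *ᵥ ((P ^ m) *ᵥ v) := by
      rw [Matrix.mulVec_mulVec, ← pow_add]
      congr 2
      ring
    rw [he]
    exact le_trans (hstep (j * m) _) (hmcontr v hv)
  have htel : ∀ (k : ℕ) (v : Z → ℝ) (j : ℕ),
      ‖emb π ((P ^ (j * k)) *ᵥ v - v)‖ ≤ j * ‖emb π ((P ^ k) *ᵥ v - v)‖ := by
    intro k v j
    induction j with
    | zero =>
      simp only [Nat.zero_mul, pow_zero, Matrix.one_mulVec, sub_self, Nat.cast_zero, zero_mul]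
      have : emb π (0 : Z → ℝ) = 0 := by ext z; simp [emb]
      rw [this, norm_zero]
    | succ j ih =>
      have he : (P ^ ((j + 1) * k)) *ᵥ v - v
          = (P ^ (j * k)) *ᵥ ((P ^ k) *ᵥ v - v) + ((P ^ (j * k)) *ᵥ v - v) := by
        rw [Matrix.mulVec_sub]
        rw [Matrix.mulVec_mulVec, ← pow_add]
        have : j * k + k = (j + 1) * k := by ring
        rw [this]
        abel
      rw [he, emb_add, ]
      calc ‖emb π ((P ^ (j * k)) *ᵥ ((P ^ k) *ᵥ v - v)) + emb π ((P ^ (j * k)) *ᵥ v - v)‖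
          ≤ ‖emb π ((P ^ (j * k)) *ᵥ ((P ^ k) *ᵥ v - v))‖ + ‖emb π ((P ^ (j * k)) *ᵥ v - v)‖ :=
            norm_add_le _ _
        _ ≤ ‖emb π ((P ^ k) *ᵥ v - v)‖ + j * ‖emb π ((P ^ k) *ᵥ v - v)‖ :=
            add_le_add (hstep _ _) ih
        _ = (j + 1 : ℕ) * ‖emb π ((P ^ k) *ᵥ v - v)‖ := by push_cast; ring
  -- the key spectral-gap estimate
  set ε : ℝ := δ ^ 2 / (2 * (m : ℝ) ^ 2) with hεdef
  have hmR : (1 : ℝ) ≤ (m : ℝ) := by exact_mod_cast hm1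
  have hm2 : (0 : ℝ) < 2 * (m : ℝ) ^ 2 := by positivity
  have hεpos : 0 < ε := by rw [hεdef]; positivity
  have hε12 : ε ≤ 1 / 2 := by
    rw [hεdef, div_le_div_iff₀ hm2 two_pos]
    nlinarith [hδ1, hδpos.le]
  have hkey : ∀ k : ℕ, 1 ≤ k → ∀ v : Z → ℝ, (∑ z, π z * v z = 0) →
      ⟪emb π v, emb π ((P ^ k) *ᵥ v)⟫ ≤ (1 - ε) * ‖emb π v‖ ^ 2 := by
    intro k hk v hv
    set a := ‖emb π v‖ with ha
    set u := (P ^ k) *ᵥ v with hu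
    have h1 : ‖emb π u‖ ≤ a := hstep k v
    have h2 : δ * a ≤ (m : ℝ) * ‖emb π (u - v)‖ := by
      have t1 : ‖emb π ((P ^ (m * k)) *ᵥ v - v)‖ ≤ m * ‖emb π (u - v)‖ := htel k v m
      have t2 : ‖emb π ((P ^ (m * k)) *ᵥ v)‖ ≤ (1 - δ) * a := by
        rw [mul_comm m k]; exact hmk k hk v hv
      have t3 : a - ‖emb π ((P ^ (m * k)) *ᵥ v)‖ ≤ ‖emb π ((P ^ (m * k)) *ᵥ v - v)‖ := by
        rw [emb_sub]
        calc a - ‖emb π ((P ^ (m * k)) *ᵥ v)‖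
            ≤ ‖emb π v - emb π ((P ^ (m * k)) *ᵥ v)‖ := norm_sub_norm_le _ _
          _ = ‖emb π ((P ^ (m * k)) *ᵥ v) - emb π v‖ := norm_sub_rev _ _
      nlinarith [norm_nonneg (emb π v)]
    have h2sq : (δ * a) ^ 2 ≤ ((m : ℝ) * ‖emb π (u - v)‖) ^ 2 :=
      pow_le_pow_left₀ (mul_nonneg hδpos.le (norm_nonneg _)) h2 2
    have h3 : ‖emb π (u - v)‖ ^ 2
        = ‖emb π u‖ ^ 2 - 2 * ⟪emb π u, emb π v⟫ + a ^ 2 := by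
      rw [emb_sub, norm_sub_sq_real]
    have hcomm : ⟪emb π v, emb π u⟫ = ⟪emb π u, emb π v⟫ := real_inner_comm _ _
    have key2 : 2 * (m : ℝ) ^ 2 * ⟪emb π v, emb π u⟫
        ≤ (2 * (m : ℝ) ^ 2 - δ ^ 2) * a ^ 2 := by
      rw [hcomm]
      nlinarith [pow_le_pow_left₀ (norm_nonneg (emb π u)) h1 2]
    rw [hεdef]
    rw [show (1 : ℝ) - δ ^ 2 / (2 * (m : ℝ) ^ 2)
        = (2 * (m : ℝ) ^ 2 - δ ^ 2) / (2 * (m : ℝ) ^ 2) by field_simp]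
    rw [div_mul_eq_mul_div, le_div_iff₀ hm2]
    linarith [key2]
  refine ⟨ε, hεpos, ?_⟩
  intro gam hgam lam hlam hgl θ
  obtain ⟨hg0, hg1⟩ := hgam
  obtain ⟨hl0, hl1⟩ := hlam
  set x : ℝ := lam * gam with hxdef
  have hx0 : 0 ≤ x := mul_nonneg hl0 hg0
  have hx1 : x < 1 := by rw [hxdef, mul_comm]; exact hgl
  have hx1' : 0 < 1 - x := by linarith
  set f : Z → ℝ := fun z => θ ⬝ᵥ ψ z with hf
  set fbar : ℝ := ∑ z, π z * f z with hfbar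
  set w : Z → ℝ := fun z => f z - fbar with hwdef
  have hw0 : ∑ z, π z * w z = 0 := by
    have h : ∑ z, π z * w z = (∑ z, π z * f z) - (∑ z, π z) * fbar := by
      rw [Finset.sum_mul, ← Finset.sum_sub_distrib]
      exact Finset.sum_congr rfl fun z _ => by rw [hwdef]; ring
    rw [h, hπ1, one_mul, ← hfbar, sub_self]
  set b : ℕ → ℝ := fun k => ⟪emb π w, emb π ((P ^ k) *ᵥ w)⟫ with hbdef
  have hb0 : b 0 = ‖emb π w‖ ^ 2 := by
    rw [hbdef]
    simp only [pow_zero, Matrix.one_mulVec]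
    exact real_inner_self_eq_norm_sq _
  have hb0nn : 0 ≤ b 0 := by rw [hb0]; positivity
  have hbk : ∀ k, 1 ≤ k → b k ≤ (1 - ε) * b 0 := by
    intro k hk
    rw [hb0]
    exact hkey k hk w hw0
  have hbabs : ∀ k, |b k| ≤ b 0 := by
    intro k
    have hbk' : b k = ⟪emb π w, emb π ((P ^ k) *ᵥ w)⟫ := rfl
    rw [hbk', hb0]
    calc |⟪emb π w, emb π ((P ^ k) *ᵥ w)⟫| ≤ ‖emb π w‖ * ‖emb π ((P ^ k) *ᵥ w)‖ :=
        abs_real_inner_le_norm _ _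
      _ ≤ ‖emb π w‖ * ‖emb π w‖ := mul_le_mul_of_nonneg_left (hstep k w) (norm_nonneg _)
      _ = ‖emb π w‖ ^ 2 := by ring
  -- quadratic form of Rmat
  have hLvmv : ∀ u v : Fin d → ℝ, qformL θ (vecMulVec u v) = (θ ⬝ᵥ u) * (v ⬝ᵥ θ) := by
    intro u v
    show θ ⬝ᵥ (vecMulVec u v) *ᵥ θ = (θ ⬝ᵥ u) * (v ⬝ᵥ θ)
    simp only [dotProduct, Matrix.mulVec, vecMulVec_apply]
    rw [Finset.sum_mul_sum]
    refine Finset.sum_congr rfl fun i _ => ?_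
    rw [Finset.mul_sum]
    exact Finset.sum_congr rfl fun j _ => by ring
  have hQRf : ∀ k : ℕ, θ ⬝ᵥ (Rmat P π ψ k) *ᵥ θ = ∑ z, π z * (f z * ((P ^ k) *ᵥ f) z) := by
    intro k
    have h1 : θ ⬝ᵥ (Rmat P π ψ k) *ᵥ θ = qformL θ (Rmat P π ψ k) := rfl
    rw [h1, Rmat, map_sum]
    calc ∑ z, qformL θ (∑ z', (π z * (P ^ k) z z') • vecMulVec (ψ z) (ψ z'))
        = ∑ z, ∑ z', (π z * (P ^ k) z z') * ((θ ⬝ᵥ ψ z) * (ψ z' ⬝ᵥ θ)) := by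
          refine Finset.sum_congr rfl fun z _ => ?_
          rw [map_sum]
          refine Finset.sum_congr rfl fun z' _ => ?_
          rw [_root_.map_smul, hLvmv]
          simp [smul_eq_mul]
      _ = ∑ z, π z * (f z * ((P ^ k) *ᵥ f) z) := by
          refine Finset.sum_congr rfl fun z _ => ?_
          rw [show ((P ^ k) *ᵥ f) z = ∑ z', (P ^ k) z z' * f z' from rfl]
          rw [Finset.mul_sum, Finset.mul_sum]
          refine Finset.sum_congr rfl fun z' _ => ?_
          have h2 : ψ z' ⬝ᵥ θ = f z' := dotProduct_comm _ _
          have h3 : θ ⬝ᵥ ψ z = f z := rfl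
          rw [h2, h3]
          ring
  have hPw0 : ∀ k : ℕ, ∑ z, π z * ((P ^ k) *ᵥ w) z = 0 := by
    intro k
    have h : ∑ z, π z * ((P ^ k) *ᵥ w) z = ∑ z', (∑ z, π z * (P ^ k) z z') * w z' := by
      calc ∑ z, π z * ((P ^ k) *ᵥ w) z
          = ∑ z, ∑ z', π z * ((P ^ k) z z' * w z') := by
            refine Finset.sum_congr rfl fun z _ => ?_
            rw [show ((P ^ k) *ᵥ w) z = ∑ z', (P ^ k) z z' * w z' from rfl, Finset.mul_sum]
        _ = ∑ z', ∑ z, π z * ((P ^ k) z z' * w z') := Finset.sum_comm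
        _ = ∑ z', (∑ z, π z * (P ^ k) z z') * w z' := by
            refine Finset.sum_congr rfl fun z' _ => ?_
            rw [Finset.sum_mul]
            exact Finset.sum_congr rfl fun z _ => by ring
    rw [h]
    simp_rw [hPkinv]
    exact hw0
  have hQR : ∀ k : ℕ, θ ⬝ᵥ (Rmat P π ψ k) *ᵥ θ = fbar ^ 2 + b k := by
    intro k
    rw [hQRf k]
    have hfw : ∀ z, f z = w z + fbar := fun z => by rw [hwdef]; ring
    have hPfz : ∀ z, ((P ^ k) *ᵥ f) z = ((P ^ k) *ᵥ w) z + fbar := by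
      intro z
      have h1 : f = w + (fun _ => fbar) := by funext z'; exact hfw z'
      rw [h1, Matrix.mulVec_add]
      have h2 : ((P ^ k) *ᵥ fun _ => fbar) z = fbar := by
        rw [show ((P ^ k) *ᵥ fun _ => fbar) z = ∑ z', (P ^ k) z z' * fbar from rfl,
          ← Finset.sum_mul, hPk1 k z, one_mul]
      show ((P ^ k) *ᵥ w) z + ((P ^ k) *ᵥ fun _ => fbar) z = _
      rw [h2]
    have hbsum : b k = ∑ z, π z * (w z * ((P ^ k) *ᵥ w) z) := by
      rw [hbdef]
      exact inner_emb π hπ0 _ _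
    calc ∑ z, π z * (f z * ((P ^ k) *ᵥ f) z)
        = ∑ z, (π z * (w z * ((P ^ k) *ᵥ w) z) + (fbar * (π z * ((P ^ k) *ᵥ w) z)
            + (fbar * (π z * w z) + fbar ^ 2 * π z))) := by
          refine Finset.sum_congr rfl fun z _ => ?_
          rw [hfw z, hPfz z]
          ring
      _ = (∑ z, π z * (w z * ((P ^ k) *ᵥ w) z)) + (fbar * ∑ z, π z * ((P ^ k) *ᵥ w) z
            + (fbar * ∑ z, π z * w z + fbar ^ 2 * ∑ z, π z)) := by
          rw [Finset.sum_add_distrib, Finset.sum_add_distrib, Finset.sum_add_distrib,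
            ← Finset.mul_sum, ← Finset.mul_sum, ← Finset.mul_sum]
      _ = fbar ^ 2 + b k := by
          rw [hPw0 k, hw0, hπ1, hbsum]
          ring
  have hpsi : θ ⬝ᵥ psibar π ψ = fbar := by
    simp only [psibar, dotProduct, Finset.sum_apply, Pi.smul_apply, smul_eq_mul]
    rw [hfbar]
    simp_rw [Finset.mul_sum]
    rw [Finset.sum_comm]
    refine Finset.sum_congr rfl fun z _ => ?_
    rw [show f z = ∑ i, θ i * ψ z i from rfl, Finset.mul_sum]
    exact Finset.sum_congr rfl fun i _ => by ring
  have hpsi2 : psibar π ψ ⬝ᵥ θ = fbar := by rw [dotProduct_comm]; exact hpsi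
  have hSig : θ ⬝ᵥ (Sigma0 P π ψ) *ᵥ θ = b 0 := by
    have h1 : θ ⬝ᵥ (Sigma0 P π ψ) *ᵥ θ = qformL θ (Sigma0 P π ψ) := rfl
    rw [h1, Sigma0, map_sub, hLvmv, hpsi, hpsi2]
    have h2 : qformL θ (Rmat P π ψ 0) = fbar ^ 2 + b 0 := hQR 0
    rw [h2]
    ring
  -- entry bounds
  have hπle1 : ∀ z, π z ≤ 1 := fun z => by
    rw [← hπ1]; exact Finset.single_le_sum (fun z' _ => hπ0 z') (Finset.mem_univ z)
  have hPkle1 : ∀ (k : ℕ) z z', (P ^ k) z z' ≤ 1 := fun k z z' => by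
    rw [← hPk1 k z]; exact Finset.single_le_sum (fun j _ => hPk0 k z j) (Finset.mem_univ z')
  set C : Fin d → Fin d → ℝ := fun i j => ∑ z, ∑ z', |ψ z i * ψ z' j| with hCdef
  have hRentry : ∀ (k : ℕ) i j, Rmat P π ψ k i j
      = ∑ z, ∑ z', (π z * (P ^ k) z z') * (ψ z i * ψ z' j) := by
    intro k i j
    simp only [Rmat, Matrix.sum_apply, Matrix.smul_apply, vecMulVec_apply, smul_eq_mul]
  have hRb : ∀ (k : ℕ) i j, |Rmat P π ψ k i j| ≤ C i j := by
    intro k i j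
    rw [hRentry k i j]
    calc |∑ z, ∑ z', (π z * (P ^ k) z z') * (ψ z i * ψ z' j)|
        ≤ ∑ z, |∑ z', (π z * (P ^ k) z z') * (ψ z i * ψ z' j)| := Finset.abs_sum_le_sum_abs _ _
      _ ≤ ∑ z, ∑ z', |(π z * (P ^ k) z z') * (ψ z i * ψ z' j)| :=
          Finset.sum_le_sum fun z _ => Finset.abs_sum_le_sum_abs _ _
      _ ≤ ∑ z, ∑ z', |ψ z i * ψ z' j| := by
          refine Finset.sum_le_sum fun z _ => Finset.sum_le_sum fun z' _ => ?_
          rw [abs_mul]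
          have h01 : |π z * (P ^ k) z z'| ≤ 1 := by
            rw [abs_of_nonneg (mul_nonneg (hπ0 z) (hPk0 k z z'))]
            calc π z * (P ^ k) z z' ≤ 1 * 1 :=
                mul_le_mul (hπle1 z) (hPkle1 k z z') (hPk0 k z z') zero_le_one
              _ = 1 := mul_one 1
          calc |π z * (P ^ k) z z'| * |ψ z i * ψ z' j| ≤ 1 * |ψ z i * ψ z' j| :=
              mul_le_mul_of_nonneg_right h01 (abs_nonneg _)
            _ = |ψ z i * ψ z' j| := one_mul _
  have hgeo : Summable (fun k : ℕ => x ^ k) := summable_geometric_of_lt_one hx0 hx1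
  have hexp : ∀ N : Matrix (Fin d) (Fin d) ℝ,
      θ ⬝ᵥ N *ᵥ θ = ∑ i, ∑ j, θ i * (N i j * θ j) := by
    intro N
    simp only [dotProduct, Matrix.mulVec, Finset.mul_sum]
  -- tsum of matrices and the quadratic form
  have key : ∀ g : ℕ → Matrix (Fin d) (Fin d) ℝ, (∀ k i j, |g k i j| ≤ C i j) →
      θ ⬝ᵥ (∑' k, x ^ k • g k) *ᵥ θ = ∑' k, x ^ k * (θ ⬝ᵥ (g k) *ᵥ θ) := by
    intro g hg
    have hsum : ∀ i j, Summable (fun k => x ^ k * g k i j) := by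
      intro i j
      apply Summable.of_norm_bounded (hgeo.mul_left (C i j))
      intro k
      rw [Real.norm_eq_abs, abs_mul, abs_pow, abs_of_nonneg hx0, mul_comm]
      exact mul_le_mul_of_nonneg_right (hg k i j) (pow_nonneg hx0 k)
    have hM : Summable (fun k => x ^ k • g k) := by
      refine Pi.summable.mpr ?_
      intro i
      refine Pi.summable.mpr ?_
      intro j
      exact hsum i j
    have happ : ∀ i j, (∑' k, x ^ k • g k) i j = ∑' k, x ^ k * g k i j := by
      intro i j
      rw [show (∑' k, x ^ k • g k) i = ∑' k, (x ^ k • g k) i from tsum_apply hM, tsum_apply (Pi.summable.mp hM i)]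
      exact tsum_congr fun k => rfl
    have hsummable2 : ∀ i j, Summable (fun k => θ i * (x ^ k * g k i j * θ j)) :=
      fun i j => (((hsum i j).mul_right (θ j)).mul_left (θ i))
    rw [hexp]
    have hterm : ∀ i j, θ i * ((∑' k, x ^ k • g k) i j * θ j)
        = ∑' k, θ i * (x ^ k * g k i j * θ j) := by
      intro i j
      rw [happ i j, ← tsum_mul_right, ← tsum_mul_left]
    calc ∑ i, ∑ j, θ i * ((∑' k, x ^ k • g k) i j * θ j)
        = ∑ i, ∑ j, ∑' k, θ i * (x ^ k * g k i j * θ j) :=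
          Finset.sum_congr rfl fun i _ => Finset.sum_congr rfl fun j _ => hterm i j
      _ = ∑ i, ∑' k, ∑ j, θ i * (x ^ k * g k i j * θ j) :=
          Finset.sum_congr rfl fun i _ => (Summable.tsum_finsetSum fun j _ => hsummable2 i j).symm
      _ = ∑' k, ∑ i, ∑ j, θ i * (x ^ k * g k i j * θ j) :=
          (Summable.tsum_finsetSum fun i _ => summable_sum fun j _ => hsummable2 i j).symm
      _ = ∑' k, x ^ k * (θ ⬝ᵥ (g k) *ᵥ θ) := by
          refine tsum_congr fun k => ?_
          rw [hexp (g k), Finset.mul_sum]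
          refine Finset.sum_congr rfl fun i _ => ?_
          rw [Finset.mul_sum]
          exact Finset.sum_congr rfl fun j _ => by ring
  have hA1 : θ ⬝ᵥ (∑' k : ℕ, x ^ k • Rmat P π ψ k) *ᵥ θ = ∑' k : ℕ, x ^ k * (fbar ^ 2 + b k) := by
    rw [key (fun k => Rmat P π ψ k) (fun k i j => hRb k i j)]
    exact tsum_congr fun k => by rw [hQR k]
  have hA2 : θ ⬝ᵥ (∑' k : ℕ, x ^ k • Rmat P π ψ (k + 1)) *ᵥ θ
      = ∑' k : ℕ, x ^ k * (fbar ^ 2 + b (k + 1)) := by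
    rw [key (fun k => Rmat P π ψ (k + 1)) (fun k i j => hRb (k + 1) i j)]
    exact tsum_congr fun k => by rw [hQR (k + 1)]
  have hLHS : θ ⬝ᵥ (Abar P π ψ lam gam) *ᵥ θ
      = -(∑' k : ℕ, x ^ k * (fbar ^ 2 + b k))
        + gam * ∑' k : ℕ, x ^ k * (fbar ^ 2 + b (k + 1)) := by
    simp only [Abar, ← hxdef]
    rw [Matrix.add_mulVec, dotProduct_add, Matrix.neg_mulVec, dotProduct_neg,
      Matrix.smul_mulVec, dotProduct_smul, smul_eq_mul, hA1, hA2]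
  -- scalar series computations
  have hsb : Summable (fun k => x ^ k * b k) := by
    apply Summable.of_norm_bounded (hgeo.mul_left (b 0))
    intro k
    rw [Real.norm_eq_abs, abs_mul, abs_pow, abs_of_nonneg hx0, mul_comm]
    exact mul_le_mul_of_nonneg_right (hbabs k) (pow_nonneg hx0 k)
  have hsb1 : Summable (fun k => x ^ k * b (k + 1)) := by
    apply Summable.of_norm_bounded (hgeo.mul_left (b 0))
    intro k
    rw [Real.norm_eq_abs, abs_mul, abs_pow, abs_of_nonneg hx0, mul_comm]
    exact mul_le_mul_of_nonneg_right (hbabs (k + 1)) (pow_nonneg hx0 k)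
  have hsf : Summable (fun k : ℕ => x ^ k * fbar ^ 2) := hgeo.mul_right _
  have hsplit : ∀ c : ℕ → ℝ, Summable (fun k => x ^ k * c k) →
      ∑' k : ℕ, x ^ k * (fbar ^ 2 + c k)
        = fbar ^ 2 * (1 - x)⁻¹ + ∑' k : ℕ, x ^ k * c k := by
    intro c hc
    have h : (fun k : ℕ => x ^ k * (fbar ^ 2 + c k))
        = fun k => x ^ k * fbar ^ 2 + x ^ k * c k := funext fun k => by ring
    rw [h, Summable.tsum_add hsf hc]
    congr 1
    rw [tsum_mul_right, tsum_geometric_of_lt_one hx0 hx1, mul_comm]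
  have hshift : ∑' k : ℕ, x ^ k * b k = b 0 + x * ∑' k : ℕ, x ^ k * b (k + 1) := by
    rw [Summable.tsum_eq_zero_add hsb]
    simp only [pow_zero, one_mul]
    congr 1
    rw [← tsum_mul_left]
    exact tsum_congr fun k => by ring
  have hB1 : ∑' k : ℕ, x ^ k * b (k + 1) ≤ (1 - ε) * b 0 * (1 - x)⁻¹ := by
    have h1 : ∀ k : ℕ, x ^ k * b (k + 1) ≤ x ^ k * ((1 - ε) * b 0) := fun k =>
      mul_le_mul_of_nonneg_left (hbk (k + 1) (Nat.le_add_left 1 k)) (pow_nonneg hx0 k)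
    calc ∑' k : ℕ, x ^ k * b (k + 1) ≤ ∑' k : ℕ, x ^ k * ((1 - ε) * b 0) :=
        Summable.tsum_le_tsum h1 hsb1 (hgeo.mul_right _)
      _ = (1 - ε) * b 0 * (1 - x)⁻¹ := by
          rw [tsum_mul_right, tsum_geometric_of_lt_one hx0 hx1, mul_comm]
  -- final assembly
  rw [hLHS, hSig, hsplit (fun k => b k) hsb, hsplit (fun k => b (k + 1)) hsb1, hshift]
  set B1 : ℝ := ∑' k : ℕ, x ^ k * b (k + 1) with hB1def
  set F : ℝ := fbar ^ 2 * (1 - x)⁻¹ with hFdef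
  have hFnn : 0 ≤ F := by rw [hFdef]; positivity
  have hgx0 : 0 ≤ gam - x := by
    have h : gam - x = gam * (1 - lam) := by rw [hxdef]; ring
    rw [h]
    exact mul_nonneg hg0 (by linarith)
  have hgx1 : gam - x ≤ 1 - x := by linarith
  have hbnd0 : 0 ≤ (1 - ε) * b 0 * (1 - x)⁻¹ := by
    have : (0:ℝ) ≤ 1 - ε := by linarith [hε12]
    positivity
  have h2 : (gam - x) * B1 ≤ (1 - ε) * b 0 := by
    calc (gam - x) * B1 ≤ (gam - x) * ((1 - ε) * b 0 * (1 - x)⁻¹) :=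
        mul_le_mul_of_nonneg_left hB1 hgx0
      _ ≤ (1 - x) * ((1 - ε) * b 0 * (1 - x)⁻¹) :=
        mul_le_mul_of_nonneg_right hgx1 hbnd0
      _ = (1 - ε) * b 0 := by
          field_simp
  have h3 : (gam - 1) * F ≤ 0 :=
    mul_nonpos_of_nonpos_of_nonneg (by linarith) hFnn
  linarith [h2, h3]
end
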